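/- arXiv:2306.14001 — 11 statements merged into one kernel-verified Lean document; each statement's English description precedes it below -/
import Mathlib

section
/- Let X be a completely regular Hausdorff topological space and f : X → ℝ ∪ {+∞} a proper lower semicontinuous function bounded from below. Let x₀ ∈ dom f and ε > 0 be such that f(x₀) < inf_X f + ε. Then there exists a continuous bounded function h : X → ℝ₊ with h(x₀) = 0 and ‖h‖_∞ = f(x₀) − inf_X f (in particular ‖h‖_∞ < ε) such that the function f + h attains its minimum on X at x₀. -/
open Filter Topology BoundedContinuousFunction

set_option maxHeartbeats 1000000

/-- **Kenderov–Revalski variational principle** (Theorem 2.1).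
`X` completely regular Hausdorff, `f : X → ℝ ∪ {+∞}` proper lower semicontinuous and
bounded below, `x₀ ∈ dom f`, `ε > 0` with `f x₀ < inf f + ε`.  Then there is a continuous
bounded `h : X → ℝ₊` with `h x₀ = 0`, `‖h‖∞ = f x₀ - inf f` (hence `‖h‖∞ < ε`) such that
`f + h` attains its minimum on `X` at `x₀`. -/
theorem kenderov_revalski_variational_principle
    {X : Type*} [TopologicalSpace X] [T2Space X] [CompletelyRegularSpace X]
    (f : X → EReal) (hbot : ∀ x, f x ≠ ⊥) (hlsc : LowerSemicontinuous f)
    (hbdd : ∃ m : ℝ, ∀ x, (m : EReal) ≤ f x)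
    (x₀ : X) (hx₀ : f x₀ ≠ ⊤)
    (ε : ℝ) (hε : 0 < ε) (hnear : f x₀ < (⨅ x, f x) + (ε : EReal)) :
    ∃ h : X →ᵇ ℝ, (∀ x, 0 ≤ h x) ∧ h x₀ = 0 ∧
      ((‖h‖ : ℝ) : EReal) = f x₀ - ⨅ x, f x ∧ ‖h‖ < ε ∧
      ∀ x, f x₀ + (h x₀ : EReal) ≤ f x + (h x : EReal) := by
  classical
  obtain ⟨m, hm⟩ := hbdd
  set I : EReal := ⨅ x, f x with hIdef
  have hmI : (m : EReal) ≤ I := le_iInf hm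
  have hIbot : I ≠ ⊥ := fun h => by simp [h] at hmI
  have hIle : I ≤ f x₀ := iInf_le _ x₀
  have hItop : I ≠ ⊤ := fun h => hx₀ (top_le_iff.mp (h ▸ hIle))
  set r₀ : ℝ := (f x₀).toReal with hr₀def
  have hr₀ : f x₀ = (r₀ : EReal) := (EReal.coe_toReal hx₀ (hbot x₀)).symm
  set iR : ℝ := I.toReal with hiRdef
  have hiR : I = (iR : EReal) := (EReal.coe_toReal hItop hIbot).symm
  set c : ℝ := r₀ - iR with hcdef
  have hIlr : iR ≤ r₀ := by
    rw [hr₀, hiR] at hIle; exact_mod_cast hIle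
  have hc0 : 0 ≤ c := sub_nonneg.2 hIlr
  have hsub : f x₀ - I = ((c : ℝ) : EReal) := by
    rw [hr₀, hiR, hcdef, EReal.coe_sub]
  have hcε : c < ε := by
    rw [hr₀, hiR, ← EReal.coe_add, EReal.coe_lt_coe_iff] at hnear
    rw [hcdef]; linarith
  rcases eq_or_lt_of_le hc0 with hc | hc
  · -- degenerate case `c = 0`: take `h = 0`
    refine ⟨0, fun x => le_rfl, rfl, ?_, ?_, ?_⟩
    · rw [norm_zero, hsub, ← hc]
    · rw [norm_zero]; exact hε
    · intro x
      simp only [BoundedContinuousFunction.coe_zero, Pi.zero_apply, EReal.coe_zero, add_zero]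
      have hr : r₀ = iR := by rw [hcdef] at hc; linarith
      rw [hr₀, hr, ← hiR]
      exact iInf_le _ x
  · -- main case `c > 0`
    set a : ℕ → ℝ := fun n => c / 2 * (2⁻¹ : ℝ) ^ n with hadef
    have ha_pos : ∀ n, 0 < a n := fun n => mul_pos (by linarith) (pow_pos (by norm_num) _)
    have ha_sum : Summable a :=
      (summable_geometric_of_lt_one (by norm_num) (by norm_num)).mul_left _
    have ha_total : ∑' n, a n = c := by
      rw [hadef, tsum_mul_left, tsum_geometric_of_lt_one (by norm_num) (by norm_num)]
      norm_num
    have ha_tail : ∀ n, ∑' j, a (j + n) = c * (2⁻¹ : ℝ) ^ n := by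
      intro n
      have he : ∀ j, a (j + n) = (c / 2 * (2⁻¹ : ℝ) ^ n) * (2⁻¹ : ℝ) ^ j := by
        intro j; rw [hadef]; simp [pow_add]; ring
      rw [tsum_congr he, tsum_mul_left, tsum_geometric_of_lt_one (by norm_num) (by norm_num)]
      norm_num; ring
    have ha_half : ∀ n, a n ≤ c / 2 := by
      intro n
      have : (2⁻¹ : ℝ) ^ n ≤ 1 := pow_le_one₀ (by norm_num) (by norm_num)
      calc a n ≤ c / 2 * 1 := by
            exact mul_le_mul_of_nonneg_left this (by linarith)
        _ = c / 2 := mul_one _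
    have ha_mono : ∀ {n j : ℕ}, n ≤ j → a j ≤ a n := by
      intro n j hnj
      exact mul_le_mul_of_nonneg_left
        (pow_le_pow_of_le_one (by norm_num) (by norm_num) hnj) (by linarith)
    -- the closed level sets
    set F : ℕ → Set X := fun n => {x | f x ≤ ((r₀ - a n : ℝ) : EReal)} with hFdef
    have hF_closed : ∀ n, IsClosed (F n) := fun n => hlsc.isClosed_preimage _
    have hx₀F : ∀ n, x₀ ∉ F n := by
      intro n hx
      have : (r₀ : EReal) ≤ ((r₀ - a n : ℝ) : EReal) := hr₀ ▸ hx
      rw [EReal.coe_le_coe_iff] at this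
      linarith [ha_pos n]
    choose g hg_cont hg_x₀ hg_one using fun n =>
      CompletelyRegularSpace.completely_regular x₀ (F n) (hF_closed n) (hx₀F n)
    -- the bounded continuous building blocks
    set φ : ℕ → (X →ᵇ ℝ) := fun n =>
      BoundedContinuousFunction.ofNormedAddCommGroup (fun x => a n * (g n x : ℝ))
        (continuous_const.mul (continuous_subtype_val.comp (hg_cont n))) (a n)
        (by
          intro x
          rw [Real.norm_eq_abs, abs_of_nonneg (mul_nonneg (ha_pos n).le (g n x).2.1)]
          calc a n * (g n x : ℝ) ≤ a n * 1 :=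
                mul_le_mul_of_nonneg_left (g n x).2.2 (ha_pos n).le
            _ = a n := mul_one _) with hφdef
    have hφ_apply : ∀ n x, φ n x = a n * (g n x : ℝ) := fun n x => rfl
    have hφ_norm : ∀ n, ‖φ n‖ ≤ a n := fun n =>
      BoundedContinuousFunction.norm_ofNormedAddCommGroup_le _ (ha_pos n).le _
    have hφ_sum : Summable φ := Summable.of_norm_bounded ha_sum hφ_norm
    set h : X →ᵇ ℝ := ∑' n, φ n with hhdef
    have hsum_pt : ∀ x, Summable (fun n => φ n x) := fun x =>
      Summable.of_norm_bounded ha_sum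
        (fun n => ((φ n).norm_coe_le_norm x).trans (hφ_norm n))
    have h_apply : ∀ x, h x = ∑' n, φ n x := by
      intro x
      rw [hhdef]
      exact (BoundedContinuousFunction.evalCLM ℝ x).map_tsum hφ_sum
    have h_nonneg : ∀ x, 0 ≤ h x := by
      intro x
      rw [h_apply]
      exact tsum_nonneg fun n => mul_nonneg (ha_pos n).le (g n x).2.1
    have h_x₀ : h x₀ = 0 := by
      rw [h_apply]
      have : ∀ n, φ n x₀ = 0 := by
        intro n; rw [hφ_apply, hg_x₀ n]; simp
      rw [tsum_congr this, tsum_zero]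
    have h_le_c : ∀ x, h x ≤ c := by
      intro x
      rw [h_apply, ← ha_total]
      refine Summable.tsum_le_tsum (fun n => ?_) (hsum_pt x) ha_sum
      rw [hφ_apply]
      calc a n * (g n x : ℝ) ≤ a n * 1 :=
            mul_le_mul_of_nonneg_left (g n x).2.2 (ha_pos n).le
        _ = a n := mul_one _
    -- the key lower estimate
    have h_ge : ∀ (x : X) (s : ℝ), f x = (s : EReal) → ∀ n, a n ≤ r₀ - s →
        c * (2⁻¹ : ℝ) ^ n ≤ h x := by
      intro x s hs n hn
      have hmem : ∀ j, n ≤ j → x ∈ F j := by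
        intro j hj
        show f x ≤ ((r₀ - a j : ℝ) : EReal)
        rw [hs, EReal.coe_le_coe_iff]
        have := ha_mono hj
        linarith
      have hone : ∀ j, n ≤ j → φ j x = a j := by
        intro j hj
        rw [hφ_apply, hg_one j (hmem j hj)]
        simp
      have hineq : ∑' j, a (j + n) ≤ ∑' j, φ j x := by
        refine Summable.tsum_le_tsum_of_inj (fun j => j + n)
          (add_left_injective n)
          (fun k _ => mul_nonneg (ha_pos k).le (g k x).2.1)
          (fun j => le_of_eq (hone (j + n) (Nat.le_add_left n j)).symm)
          ((summable_nat_add_iff n).2 ha_sum) (hsum_pt x)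
      rw [ha_tail n] at hineq
      rw [h_apply]
      exact hineq
    -- the minimality property
    have hmin : ∀ x, f x₀ + ((h x₀ : ℝ) : EReal) ≤ f x + ((h x : ℝ) : EReal) := by
      intro x
      rw [h_x₀, hr₀]
      simp only [EReal.coe_zero, add_zero]
      by_cases hx : f x = ⊤
      · rw [hx, EReal.top_add_coe]; exact le_top
      · set s : ℝ := (f x).toReal with hsdef
        have hs : f x = (s : EReal) := (EReal.coe_toReal hx (hbot x)).symm
        have hIs : iR ≤ s := by
          have : I ≤ f x := iInf_le _ x
          rw [hiR, hs] at this; exact_mod_cast this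
        have key : r₀ ≤ s + h x := by
          rcases le_or_gt r₀ s with h1 | h1
          · linarith [h_nonneg x]
          · set d : ℝ := r₀ - s with hddef
            have hd : 0 < d := by rw [hddef]; linarith
            have hdc : d ≤ c := by rw [hddef, hcdef]; linarith
            have hex : ∃ n, a n ≤ d := by
              obtain ⟨n, hn⟩ := exists_pow_lt_of_lt_one
                (show (0 : ℝ) < d * 2 / c by positivity)
                (show (2⁻¹ : ℝ) < 1 by norm_num)
              refine ⟨n, le_of_lt ?_⟩
              have h2 := mul_lt_mul_of_pos_left hn (show (0 : ℝ) < c / 2 by linarith)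
              have h3 : c / 2 * (d * 2 / c) = d := by field_simp
              rw [hadef]
              calc c / 2 * (2⁻¹ : ℝ) ^ n < c / 2 * (d * 2 / c) := h2
                _ = d := h3
            set n₀ := Nat.find hex with hn₀def
            have hn₀ : a n₀ ≤ d := Nat.find_spec hex
            have hge := h_ge x s hs n₀ (by rw [hddef] at hn₀; linarith)
            have hcd : d ≤ c * (2⁻¹ : ℝ) ^ n₀ := by
              rcases Nat.eq_zero_or_pos n₀ with h0 | h0
              · rw [h0]; simpa using hdc
              · obtain ⟨m, hm'⟩ := Nat.exists_eq_succ_of_ne_zero h0.ne'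
                have hmin' : ¬ a m ≤ d := Nat.find_min hex (by omega)
                push_neg at hmin'
                have : a m = c * (2⁻¹ : ℝ) ^ n₀ := by
                  rw [hadef, hm', pow_succ]; ring
                linarith
            linarith
        rw [hs, ← EReal.coe_add, EReal.coe_le_coe_iff]
        exact key
    -- the norm computation
    have h_norm : ‖h‖ = c := by
      refine le_antisymm ((BoundedContinuousFunction.norm_le hc0).2 fun x => ?_) ?_
      · rw [Real.norm_eq_abs, abs_of_nonneg (h_nonneg x)]
        exact h_le_c x
      · have hlt : I < I + ((c / 2 : ℝ) : EReal) := by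
          rw [hiR, ← EReal.coe_add, EReal.coe_lt_coe_iff]
          linarith
        obtain ⟨x, hx⟩ := iInf_lt_iff.mp (show (⨅ x, f x) < I + ((c / 2 : ℝ) : EReal) from hlt)
        have hxtop : f x ≠ ⊤ := ne_top_of_lt hx
        set s : ℝ := (f x).toReal with hsdef
        have hs : f x = (s : EReal) := (EReal.coe_toReal hxtop (hbot x)).symm
        have hslt : s < iR + c / 2 := by
          rw [hs, hiR, ← EReal.coe_add, EReal.coe_lt_coe_iff] at hx
          exact hx
        have hge := h_ge x s hs 0 (by
          have h1 := ha_half 0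
          have h2 : c = r₀ - iR := hcdef
          linarith)
        rw [pow_zero, mul_one] at hge
        calc c ≤ h x := hge
          _ ≤ |h x| := le_abs_self _
          _ = ‖h x‖ := (Real.norm_eq_abs _).symm
          _ ≤ ‖h‖ := h.norm_coe_le_norm x
    exact ⟨h, h_nonneg, h_x₀, by rw [h_norm, hsub], by rw [h_norm]; exact hcε, hmin⟩
end

section
/- Let X be a Hausdorff topological space. Suppose that for every proper lower semicontinuous function f : X → ℝ ∪ {+∞} bounded from below and every x₀ ∈ dom f there exists a continuous bounded function h : X → ℝ₊ with h(x₀) = 0 and ‖h‖_∞ = f(x₀) − inf_X f such that f + h attains its minimum on X at x₀. Then X is a completely regular topological space. -/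
/- For an open `U ∋ x₀`, apply the principle at `x₀` to the indicator `f = 𝟙_U`. As
`f + h` is minimal at `x₀`, where it equals `1`, while `f = 0` off `U`, the function `h` vanishes
at `x₀` and is `≥ 1` off `U`; truncated to `[0, 1]` it separates `x₀` from `Uᶜ`. -/

open BoundedContinuousFunction

lemma CompletelyRegularSpace.of_forall_isOpen_exists_real {X : Type*} [TopologicalSpace X]
    (H : ∀ (x : X) (U : Set X), IsOpen U → x ∈ U →
      ∃ h : C(X, ℝ), h x = 0 ∧ ∀ y ∉ U, 1 ≤ h y) :
    CompletelyRegularSpace X := by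
  refine completelyRegularSpace_iff_isOpen.mpr fun x U hU hx => ?_
  obtain ⟨h, hx₀, hle⟩ := H x U hU hx
  refine ⟨Set.projIcc 0 1 zero_le_one ∘ h, continuous_projIcc.comp h.continuous, ?_,
    fun y hy => ?_⟩
  · simp [hx₀]
  · exact Set.projIcc_of_right_le _ (hle y hy)

theorem completelyRegular_of_variational_principle_general
    {X : Type*} [TopologicalSpace X]
    (H : ∀ f : X → EReal, (∀ x, f x ≠ ⊥) → LowerSemicontinuous f →
      (∃ m : ℝ, ∀ x, (m : EReal) ≤ f x) → (∃ x, f x ≠ ⊤) →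
      ∀ x₀ : X, f x₀ ≠ ⊤ →
        ∃ h : X →ᵇ ℝ, (∀ x, 0 ≤ h x) ∧ h x₀ = 0 ∧
          ((‖h‖ : ℝ) : EReal) = f x₀ - ⨅ x, f x ∧
          ∀ x, f x₀ + (h x₀ : EReal) ≤ f x + (h x : EReal)) :
    CompletelyRegularSpace X := by
  refine .of_forall_isOpen_exists_real fun x₀ U hU hx₀ => ?_
  set f : X → EReal := U.indicator fun _ => 1
  have hf_nonneg : ∀ x, 0 ≤ f x := Set.indicator_nonneg fun _ _ => zero_le_one
  have hf_ne_top : ∀ x, f x ≠ ⊤ := fun x => by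
    by_cases hx : x ∈ U <;> simp [f, hx, ← EReal.coe_one, EReal.coe_ne_top]
  obtain ⟨h, -, hx₀_zero, -, hmin⟩ :=
    H f (fun x => ne_bot_of_le_ne_bot EReal.zero_ne_bot (hf_nonneg x))
    (hU.lowerSemicontinuous_indicator zero_le_one) ⟨0, by exact_mod_cast hf_nonneg⟩
    ⟨x₀, hf_ne_top x₀⟩ x₀ (hf_ne_top x₀)
  refine ⟨h.toContinuousMap, hx₀_zero, fun y hy => ?_⟩
  have h_one_le : ((1 : ℝ) : EReal) ≤ h y := by
    simpa [f, Set.indicator_of_mem hx₀, Set.indicator_of_notMem hy, hx₀_zero] using hmin y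
  exact_mod_cast h_one_le

/-- **Theorem 2.2.**  If in a Hausdorff space `X` the Kenderov–Revalski variational
principle holds for every proper lower semicontinuous function bounded from below,
then `X` is completely regular. -/
theorem completelyRegular_of_variational_principle
    {X : Type*} [TopologicalSpace X] [T2Space X]
    (H : ∀ f : X → EReal, (∀ x, f x ≠ ⊥) → LowerSemicontinuous f →
      (∃ m : ℝ, ∀ x, (m : EReal) ≤ f x) → (∃ x, f x ≠ ⊤) →
      ∀ x₀ : X, f x₀ ≠ ⊤ →
        ∃ h : X →ᵇ ℝ, (∀ x, 0 ≤ h x) ∧ h x₀ = 0 ∧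
          ((‖h‖ : ℝ) : EReal) = f x₀ - ⨅ x, f x ∧
          ∀ x, f x₀ + (h x₀ : EReal) ≤ f x + (h x : EReal)) :
    CompletelyRegularSpace X :=
  completelyRegular_of_variational_principle_general H
end

section
/- Let X be a Hausdorff topological space. Suppose that for every closed set A ⊆ X and every point x₀ ∉ A, letting f be the function equal to 0 on A and 1 elsewhere, there exists a continuous bounded function h : X → ℝ₊ with h(x₀) = 0 and ‖h‖_∞ = f(x₀) − inf_X f such that f + h attains its minimum on X at x₀. Then X is a completely regular topological space (i.e., the variational principle need only hold for characteristic functions of closed sets). -/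
open Filter Topology BoundedContinuousFunction

/-! Given `x₀ ∉ A`, let `f` be the indicator of `Aᶜ`. A perturbation `h ≥ 0` with `h x₀ = 0`
for which `f + h` is minimal at `x₀` satisfies `h ≥ f x₀ - f = 1` on `A`; truncating `h` to
`[0, 1]` gives the Urysohn function separating `x₀` from `A`. -/

lemma CompletelyRegularSpace.of_exists_continuous_real {X : Type*} [TopologicalSpace X]
    (H : ∀ x : X, ∀ K : Set X, IsClosed K → x ∉ K →
      ∃ g : X → ℝ, Continuous g ∧ g x ≤ 0 ∧ ∀ y ∈ K, 1 ≤ g y) :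
    CompletelyRegularSpace X := by
  refine ⟨fun x K hK hx => ?_⟩
  obtain ⟨g, hg, hgx, hgK⟩ := H x K hK hx
  refine ⟨Set.projIcc 0 1 zero_le_one ∘ g, continuous_projIcc.comp hg, ?_, fun y hy => ?_⟩
  · exact Set.projIcc_of_le_left _ hgx
  · exact Set.projIcc_of_right_le _ (hgK y hy)

theorem completelyRegular_of_variational_principle_for_characteristic_functions_general
    {X : Type*} [TopologicalSpace X]
    (H : ∀ A : Set X, IsClosed A → ∀ x₀ ∉ A,
      ∀ f : X → ℝ, (∀ x ∈ A, f x = 0) → (∀ x ∉ A, f x = 1) →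
      ∃ h : X →ᵇ ℝ, (∀ x, 0 ≤ h x) ∧ h x₀ = 0 ∧
        ‖h‖ = f x₀ - ⨅ x, f x ∧
        ∀ x, f x₀ + h x₀ ≤ f x + h x) :
    CompletelyRegularSpace X := by
  refine CompletelyRegularSpace.of_exists_continuous_real fun x₀ A hA hx₀ => ?_
  have f_eq_zero (x : X) (hx : x ∈ A) : Aᶜ.indicator 1 x = (0 : ℝ) :=
    Set.indicator_of_notMem (Set.notMem_compl_iff.mpr hx) _
  have f_eq_one (x : X) (hx : x ∉ A) : Aᶜ.indicator 1 x = (1 : ℝ) :=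
    Set.indicator_of_mem (Set.mem_compl hx) _
  obtain ⟨h, -, hx₀_zero, -, hmin⟩ := H A hA x₀ hx₀ _ f_eq_zero f_eq_one
  refine ⟨h, h.continuous, hx₀_zero.le, fun y hy => ?_⟩
  have := hmin y
  rw [f_eq_one x₀ hx₀, f_eq_zero y hy, hx₀_zero] at this
  linarith

/-- **Remark after Theorem 2.2.**  For a Hausdorff space `X` it suffices that the
variational principle holds for characteristic functions of closed sets (the function
`f` equal to `0` on a closed set `A` and `1` elsewhere, i.e. the indicator of `Aᶜ`) to
conclude that `X` is completely regular. -/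
theorem completelyRegular_of_variational_principle_for_characteristic_functions
    {X : Type*} [TopologicalSpace X] [T2Space X]
    (H : ∀ A : Set X, IsClosed A → ∀ x₀ ∉ A,
      ∀ f : X → ℝ, (∀ x ∈ A, f x = 0) → (∀ x ∉ A, f x = 1) →
      ∃ h : X →ᵇ ℝ, (∀ x, 0 ≤ h x) ∧ h x₀ = 0 ∧
        ‖h‖ = f x₀ - ⨅ x, f x ∧
        ∀ x, f x₀ + h x₀ ≤ f x + h x) :
    CompletelyRegularSpace X :=
  completelyRegular_of_variational_principle_for_characteristic_functions_general H
end

section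
/- Let X be a completely regular Hausdorff topological space and f : X → ℝ ∪ {+∞} a proper lower semicontinuous function bounded from below. Let x₀ ∈ dom f be a point having a countable local base of neighbourhoods in X, and let ε > 0 be arbitrary. Then there exists a continuous bounded function h : X → ℝ₊ with h(x₀) = 0 and ‖h‖_∞ < f(x₀) − inf_X f + ε such that the function f + h attains its strong minimum on X at x₀. -/
open Filter Topology BoundedContinuousFunction

/-- `x₀` is a strong minimum of `g` on `X`: `g` attains its minimum on `X` uniquely
at `x₀`, and every minimizing sequence converges to `x₀`. -/
def StrongMinAt {X : Type*} [TopologicalSpace X] (g : X → EReal) (x₀ : X) : Prop :=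
  (∀ x, g x₀ ≤ g x) ∧ (∀ x, g x = g x₀ → x = x₀) ∧
  ∀ u : ℕ → X, Tendsto (fun n => g (u n)) atTop (𝓝 (⨅ x, g x)) →
    Tendsto u atTop (𝓝 x₀)

private lemma aux_pow2 (c : ℝ) (n : ℕ) : c / 2 ^ (n + 1) = (c / 2) * (1 / 2) ^ n := by
  rw [div_pow, one_pow, div_mul_div_comm, mul_one, pow_succ']

set_option maxHeartbeats 1000000 in
/-- **Strong variational principle of Kenderov–Revalski** (Theorem 2.3).
`X` completely regular Hausdorff, `f : X → ℝ ∪ {+∞}` proper lower semicontinuous and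
bounded below, `x₀ ∈ dom f` having a countable local base, `ε > 0`.  Then there is a
continuous bounded `h : X → ℝ₊` with `h x₀ = 0`, `‖h‖∞ < f x₀ - inf f + ε` such that
`f + h` attains its strong minimum on `X` at `x₀`. -/
theorem kenderov_revalski_strong_variational_principle
    {X : Type*} [TopologicalSpace X] [T2Space X] [CompletelyRegularSpace X]
    (f : X → EReal) (hbot : ∀ x, f x ≠ ⊥) (hlsc : LowerSemicontinuous f)
    (hbdd : ∃ m : ℝ, ∀ x, (m : EReal) ≤ f x)
    (x₀ : X) (hx₀ : f x₀ ≠ ⊤) (hbase : (𝓝 x₀).IsCountablyGenerated)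
    (ε : ℝ) (hε : 0 < ε) :
    ∃ h : X →ᵇ ℝ, (∀ x, 0 ≤ h x) ∧ h x₀ = 0 ∧
      ((‖h‖ : ℝ) : EReal) < f x₀ - (⨅ x, f x) + (ε : EReal) ∧
      StrongMinAt (fun x => f x + (h x : EReal)) x₀ := by
  classical
  obtain ⟨m, hm⟩ := hbdd
  set J : EReal := ⨅ x, f x with hJdef
  have hJ_le : J ≤ f x₀ := iInf_le f x₀
  have hJ_bot : J ≠ ⊥ := by
    intro hc
    have h1 : (m : EReal) ≤ J := le_iInf hm
    rw [hc, le_bot_iff] at h1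
    exact EReal.coe_ne_bot m h1
  have hJ_top : J ≠ ⊤ := fun hc => hx₀ (top_le_iff.mp (hc ▸ hJ_le))
  set A : ℝ := (f x₀).toReal with hAdef
  have hA : (A : EReal) = f x₀ := EReal.coe_toReal hx₀ (hbot x₀)
  set B : ℝ := J.toReal with hBdef
  have hB : (B : EReal) = J := EReal.coe_toReal hJ_top hJ_bot
  have hBA : B ≤ A := by
    rw [← EReal.coe_le_coe_iff, hA, hB]; exact hJ_le
  set δ : ℝ := ε / 2 with hδdef
  have hδ : 0 < δ := by positivity
  set r : ℝ := A - B with hrdef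
  have hr : 0 ≤ r := sub_nonneg.mpr hBA
  have hJB : ∀ x, (B : EReal) ≤ f x := fun x => hB ▸ iInf_le f x
  clear_value J A B δ r
  -- countable antitone basis
  haveI := hbase
  obtain ⟨s, hs⟩ := (𝓝 x₀).exists_antitone_basis
  -- lsc neighborhoods
  set W : ℕ → Set X := fun k => f ⁻¹' Set.Ioi ((A - δ / 2 ^ (k + 2) : ℝ) : EReal) with hWdef
  have hWopen : ∀ k, IsOpen (W k) := fun k => hlsc.isOpen_preimage _
  have hWx₀ : ∀ k, x₀ ∈ W k := by
    intro k
    have h1 : ((A - δ / 2 ^ (k + 2) : ℝ) : EReal) < (A : EReal) := by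
      rw [EReal.coe_lt_coe_iff]
      have : (0:ℝ) < δ / 2 ^ (k + 2) := by positivity
      linarith
    show f x₀ ∈ Set.Ioi _
    rw [← hA]
    exact h1
  -- the basis V
  set V : ℕ → Set X := fun n => interior (s n) ∩ ⋂ k ∈ Finset.range (n + 1), W k with hVdef
  have hVopen : ∀ n, IsOpen (V n) :=
    fun n => isOpen_interior.inter (isOpen_biInter_finset fun k _ => hWopen k)
  have hVx₀ : ∀ n, x₀ ∈ V n := by
    intro n
    refine ⟨mem_interior_iff_mem_nhds.mpr (hs.toHasBasis.mem_of_mem trivial), ?_⟩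
    exact Set.mem_biInter fun k _ => hWx₀ k
  have hVanti : Antitone V := by
    intro n p hnp x hx
    refine ⟨interior_mono (hs.antitone hnp) hx.1, ?_⟩
    have h2 := hx.2
    rw [Set.mem_iInter₂] at h2 ⊢
    intro k hk
    exact h2 k (Finset.mem_range.mpr ((Finset.mem_range.mp hk).trans_le (by omega)))
  have hVbasis : ∀ U ∈ 𝓝 x₀, ∃ n, V n ⊆ U := by
    intro U hU
    obtain ⟨n, -, hsn⟩ := hs.toHasBasis.mem_iff.mp hU
    exact ⟨n, Set.inter_subset_left.trans (interior_subset.trans hsn)⟩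
  have hVf : ∀ n, ∀ x ∈ V n, ((A - δ / 2 ^ (n + 2) : ℝ) : EReal) < f x := by
    intro n x hx
    have h2 := hx.2
    rw [Set.mem_iInter₂] at h2
    exact h2 n (Finset.self_mem_range_succ n)
  clear_value W V
  -- bump functions
  have hg : ∀ n : ℕ, ∃ g : X →ᵇ ℝ,
      (∀ x, g x ∈ Set.Icc (0:ℝ) 1) ∧ g x₀ = 0 ∧ ∀ x, x ∉ V n → g x = 1 := by
    intro n
    obtain ⟨q, hqc, hq0, hq1⟩ := CompletelyRegularSpace.completely_regular x₀ (V n)ᶜ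
      (hVopen n).isClosed_compl (by simp [hVx₀ n])
    refine ⟨BoundedContinuousFunction.ofNormedAddCommGroup (fun x => (q x : ℝ))
      (continuous_subtype_val.comp hqc) 1 (fun x => ?_), fun x => (q x).2, ?_, ?_⟩
    · rw [Real.norm_eq_abs, abs_le]
      exact ⟨by linarith [(q x).2.1], (q x).2.2⟩
    · simpa using congrArg Subtype.val hq0
    · intro x hx
      simpa using congrArg Subtype.val (hq1 hx)
  choose g hg01 hg0 hg1 using hg
  -- coefficients
  set a : ℕ → ℝ := fun n => δ / 2 ^ (n + 1) + (if n = 0 then r else 0) with hadef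
  have ha_nonneg : ∀ n, 0 ≤ a n := by
    intro n; dsimp only [a]; positivity
  have hgeom : Summable (fun n : ℕ => δ / 2 ^ (n + 1)) := by
    exact (summable_geometric_two.mul_left (δ / 2)).congr fun n => (aux_pow2 δ n).symm
  have hif : Summable (fun n : ℕ => if n = 0 then r else (0:ℝ)) := by
    apply summable_of_ne_finset_zero (s := {0})
    intro n hn
    simp only [Finset.mem_singleton] at hn
    simp [hn]
  have hsuma : Summable a := hgeom.add hif
  have hgeomsum : ∑' n : ℕ, δ / 2 ^ (n + 1) = δ := by
    rw [tsum_congr (fun n => aux_pow2 δ n), tsum_mul_left, tsum_geometric_two]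
    ring
  have hasum : ∑' n, a n = r + δ := by
    rw [Summable.tsum_add hgeom hif, hgeomsum, tsum_ite_eq]
    ring
  have htail : ∀ n : ℕ, ∑' q : ℕ, a (q + (n + 1)) = δ / 2 ^ (n + 1) := by
    intro n
    have h1 : ∀ q : ℕ, a (q + (n + 1)) = (δ / 2 ^ (n + 2)) * ((1:ℝ)/2) ^ q := by
      intro q
      show δ / 2 ^ (q + (n + 1) + 1) + (if q + (n + 1) = 0 then r else 0) = _
      rw [if_neg (by omega), add_zero, show q + (n + 1) + 1 = (n + 2) + q from by ring,
        pow_add, div_pow, one_pow, div_mul_div_comm, mul_one]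
    rw [tsum_congr h1, tsum_mul_left, tsum_geometric_two, pow_succ, ← div_div]
    exact div_mul_cancel₀ _ two_ne_zero
  clear_value a
  -- the function h
  set F : ℕ → (X →ᵇ ℝ) := fun n => a n • g n with hFdef
  have hFnorm : ∀ n, ‖F n‖ ≤ a n := by
    intro n
    show ‖a n • g n‖ ≤ a n
    have hgn : ‖g n‖ ≤ 1 := (BoundedContinuousFunction.norm_le zero_le_one).mpr fun x => by
      rw [Real.norm_eq_abs, abs_le]
      exact ⟨by linarith [(hg01 n x).1], (hg01 n x).2⟩
    calc ‖a n • g n‖ ≤ ‖a n‖ * ‖g n‖ := norm_smul_le (α := ℝ) (β := X →ᵇ ℝ) (a n) (g n)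
      _ ≤ a n * 1 := by
          apply mul_le_mul (le_of_eq ?_) hgn (norm_nonneg _) (ha_nonneg n)
          rw [Real.norm_eq_abs]
          exact abs_of_nonneg (ha_nonneg n)
      _ = a n := mul_one _
  have hFsummable : Summable F := Summable.of_norm_bounded hsuma hFnorm
  set h : X →ᵇ ℝ := ∑' n, F n with hhdef
  have heval : ∀ x, h x = ∑' n, a n * g n x := by
    intro x
    have h1 := (BoundedContinuousFunction.evalCLM ℝ (α := X) (β := ℝ) x).map_tsum hFsummable
    simpa [hhdef, F] using h1
  clear_value h
  clear hhdef hFsummable hFnorm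
  clear_value F
  clear hFdef F
  have hsx : ∀ x, Summable (fun n => a n * g n x) := by
    intro x
    apply Summable.of_nonneg_of_le (fun n => mul_nonneg (ha_nonneg n) (hg01 n x).1)
      (fun n => ?_) hsuma
    calc a n * g n x ≤ a n * 1 := by
          apply mul_le_mul_of_nonneg_left (hg01 n x).2 (ha_nonneg n)
      _ = a n := mul_one _
  have hnonneg : ∀ x, 0 ≤ h x := by
    intro x
    rw [heval]
    exact tsum_nonneg fun n => mul_nonneg (ha_nonneg n) (hg01 n x).1
  have hhx₀ : h x₀ = 0 := by
    rw [heval]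
    simp [hg0]
  have hub : ∀ x, h x ≤ r + δ := by
    intro x
    rw [heval, ← hasum]
    apply Summable.tsum_le_tsum _ (hsx x) hsuma
    intro n
    calc a n * g n x ≤ a n * 1 := mul_le_mul_of_nonneg_left (hg01 n x).2 (ha_nonneg n)
      _ = a n := mul_one _
  have hnorm : ‖h‖ ≤ r + δ := by
    apply (BoundedContinuousFunction.norm_le (by positivity)).mpr
    intro x
    rw [Real.norm_eq_abs, abs_of_nonneg (hnonneg x)]
    exact hub x
  -- lower bounds for h
  have hlb0 : ∀ x, x ∉ V 0 → r + δ ≤ h x := by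
    intro x hx
    rw [heval, ← hasum]
    apply Summable.tsum_le_tsum _ hsuma (hsx x)
    intro n
    have hxn : x ∉ V n := fun hc => hx (hVanti (Nat.zero_le n) hc)
    rw [hg1 n x hxn, mul_one]
  have hlbn : ∀ n : ℕ, ∀ x, x ∉ V (n + 1) → δ / 2 ^ (n + 1) ≤ h x := by
    intro n x hx
    rw [heval]
    rw [← Summable.sum_add_tsum_nat_add (f := fun i => a i * g i x) (n + 1) (hsx x)]
    have hs1 : Summable (fun q : ℕ => a (q + (n + 1))) :=
      (summable_nat_add_iff (n + 1)).2 hsuma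
    have hs2 : Summable (fun q : ℕ => a (q + (n + 1)) * g (q + (n + 1)) x) :=
      (summable_nat_add_iff (n + 1)).2 (hsx x)
    have hle : ∀ q : ℕ, a (q + (n + 1)) ≤ a (q + (n + 1)) * g (q + (n + 1)) x := by
      intro q
      have hxq : x ∉ V (q + (n + 1)) := fun hc => hx (hVanti (by omega) hc)
      rw [hg1 _ x hxq, mul_one]
    have h2 : δ / 2 ^ (n + 1) ≤ ∑' q : ℕ, a (q + (n + 1)) * g (q + (n + 1)) x := by
      rw [← htail n]
      exact Summable.tsum_le_tsum hle hs1 hs2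
    have h3 : (0:ℝ) ≤ ∑ i ∈ Finset.range (n + 1), a i * g i x :=
      Finset.sum_nonneg fun i _ => mul_nonneg (ha_nonneg i) (hg01 i x).1
    linarith
  -- the perturbed function
  set φ : X → EReal := fun x => f x + (h x : EReal) with hφdef
  have hφx₀ : φ x₀ = (A : EReal) := by
    rw [hφdef]
    simp only [hhx₀, EReal.coe_zero, add_zero, hA]
  -- key estimate
  have hkey : ∀ n : ℕ, ∀ x, x ∉ V n → ((A + δ / 2 ^ (n + 1) : ℝ) : EReal) ≤ φ x := by
    intro n
    induction n with
    | zero =>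
      intro x hx
      have h1 : ((A + δ : ℝ) : EReal) ≤ φ x := by
        have : ((B : ℝ) : EReal) + ((r + δ : ℝ) : EReal) ≤ f x + (h x : EReal) :=
          add_le_add (hJB x) (EReal.coe_le_coe_iff.mpr (hlb0 x hx))
        calc ((A + δ : ℝ) : EReal) = ((B : ℝ) : EReal) + ((r + δ : ℝ) : EReal) := by
              rw [← EReal.coe_add]; norm_cast; rw [hrdef]; ring
          _ ≤ φ x := this
      refine le_trans ?_ h1
      rw [EReal.coe_le_coe_iff]
      have : (0:ℝ) < δ / 2 ^ (0 + 1) := by positivity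
      have h2 : δ / 2 ^ (0 + 1) ≤ δ := by
        rw [pow_one]
        linarith
      linarith
    | succ n ih =>
      intro x hx
      by_cases hxn : x ∈ V n
      · have h1 : ((A - δ / 2 ^ (n + 2) : ℝ) : EReal) ≤ f x := (hVf n x hxn).le
        have h2 : ((δ / 2 ^ (n + 1) : ℝ) : EReal) ≤ (h x : EReal) :=
          EReal.coe_le_coe_iff.mpr (hlbn n x hx)
        have h3 := add_le_add h1 h2
        rw [← EReal.coe_add] at h3
        refine le_trans ?_ h3
        rw [EReal.coe_le_coe_iff]
        have h4 : δ / 2 ^ (n + 2) + δ / 2 ^ (n + 2) = δ / 2 ^ (n + 1) := by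
          rw [pow_succ]
          field_simp
          ring
        linarith
      · refine le_trans ?_ (ih x hxn)
        rw [EReal.coe_le_coe_iff]
        have h4 : δ / 2 ^ (n + 2) ≤ δ / 2 ^ (n + 1) := by
          apply div_le_div_of_nonneg_left hδ.le (by positivity)
          apply pow_le_pow_right₀ one_le_two (by omega)
        linarith
  -- global minimum
  have hmin : ∀ x, (A : EReal) ≤ φ x := by
    intro x
    by_cases hex : ∃ n, x ∉ V n
    · obtain ⟨n, hn⟩ := hex
      refine le_trans ?_ (hkey n x hn)
      rw [EReal.coe_le_coe_iff]
      have : (0:ℝ) < δ / 2 ^ (n + 1) := by positivity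
      linarith
    · push_neg at hex
      have h1 : ∀ n : ℕ, ((A - δ / 2 ^ (n + 2) : ℝ) : EReal) ≤ φ x := by
        intro n
        have := (hVf n x (hex n)).le
        calc ((A - δ / 2 ^ (n + 2) : ℝ) : EReal) ≤ f x := this
          _ = f x + (0 : EReal) := (add_zero _).symm
          _ ≤ f x + (h x : EReal) := by
              apply add_le_add le_rfl
              exact_mod_cast hnonneg x
      have htendR : Tendsto (fun n : ℕ => A - δ / 2 ^ (n + 2)) atTop (𝓝 A) := by
        have h0 : Tendsto (fun n : ℕ => δ / 2 ^ (n + 2)) atTop (𝓝 0) := by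
          have hpow : Tendsto (fun n : ℕ => ((1:ℝ)/2) ^ n) atTop (𝓝 0) := by
            apply tendsto_pow_atTop_nhds_zero_of_lt_one <;> norm_num
          have heq : (fun n : ℕ => δ / 2 ^ (n + 2)) = fun n : ℕ => (δ/4) * ((1:ℝ)/2) ^ n := by
            funext n
            rw [div_pow, one_pow, div_mul_div_comm, mul_one,
              show (4:ℝ) = 2 ^ 2 from by norm_num, ← pow_add,
              show 2 + n = n + 2 from by omega]
          rw [heq]
          simpa using hpow.const_mul (δ/4)
        simpa using tendsto_const_nhds.sub h0
      have htend : Tendsto (fun n : ℕ => ((A - δ / 2 ^ (n + 2) : ℝ) : EReal)) atTop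
          (𝓝 ((A : ℝ) : EReal)) :=
        (continuous_coe_real_ereal.tendsto A).comp htendR
      exact le_of_tendsto htend (Eventually.of_forall h1)
  -- uniqueness
  have huniq : ∀ x, φ x = φ x₀ → x = x₀ := by
    intro x hxeq
    by_contra hne
    have hUmem : ({x}ᶜ : Set X) ∈ 𝓝 x₀ :=
      (isOpen_compl_singleton).mem_nhds (by simp [Ne.symm hne])
    obtain ⟨n, hVn⟩ := hVbasis _ hUmem
    have hxV : x ∉ V n := fun hc => (hVn hc) rfl
    have h1 := hkey n x hxV
    rw [hxeq, hφx₀] at h1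
    rw [EReal.coe_le_coe_iff] at h1
    have : (0:ℝ) < δ / 2 ^ (n + 1) := by positivity
    linarith
  -- infimum value
  have hInf : (⨅ x, φ x) = (A : EReal) := by
    apply le_antisymm
    · exact le_of_le_of_eq (iInf_le φ x₀) hφx₀
    · exact le_iInf hmin
  refine ⟨h, hnonneg, hhx₀, ?_, ?_, ?_, ?_⟩
  · -- norm bound
    have hRHS : f x₀ - J + (ε : EReal) = ((r + ε : ℝ) : EReal) := by
      rw [← hA, ← hB, ← EReal.coe_sub, ← EReal.coe_add, hrdef]
    rw [hRHS, EReal.coe_lt_coe_iff]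
    have : δ < ε := by rw [hδdef]; linarith
    linarith [hnorm]
  · -- minimality
    show ∀ x, φ x₀ ≤ φ x
    intro x
    rw [hφx₀]
    exact hmin x
  · -- uniqueness
    show ∀ x, φ x = φ x₀ → x = x₀
    exact huniq
  · -- minimizing sequences
    show ∀ u : ℕ → X, Tendsto (fun n => φ (u n)) atTop (𝓝 (⨅ x, φ x)) →
      Tendsto u atTop (𝓝 x₀)
    intro u hu
    have hu' : Tendsto (fun n => φ (u n)) atTop (𝓝 ((A : ℝ) : EReal)) := by
      rw [← hInf]
      exact hu
    rw [Filter.tendsto_def]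
    intro U hU
    obtain ⟨n, hVU⟩ := hVbasis U hU
    have hlt : ((A : ℝ) : EReal) < ((A + δ / 2 ^ (n + 1) : ℝ) : EReal) := by
      rw [EReal.coe_lt_coe_iff]
      have : (0:ℝ) < δ / 2 ^ (n + 1) := by positivity
      linarith
    have hev : ∀ᶠ j in atTop, φ (u j) < ((A + δ / 2 ^ (n + 1) : ℝ) : EReal) :=
      hu'.eventually_lt_const hlt
    filter_upwards [hev] with j hj
    apply hVU
    by_contra hc
    exact absurd (hkey n (u j) hc) (not_le.mpr hj)
end

section
/- Let X be a Hausdorff topological space. Suppose that for every proper lower semicontinuous function f : X → ℝ ∪ {+∞} bounded from below, every x₀ ∈ dom f, and every ε > 0, there exists a continuous bounded function h : X → ℝ₊ with h(x₀) = 0 and ‖h‖_∞ < f(x₀) − inf_X f + ε such that f + h attains its strong minimum on X at x₀. Then X is a completely regular topological space that satisfies the first axiom of countability (every point has a countable local base of neighbourhoods). -/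
/-!
Applying the variational principle to `f ≡ 0` gives, at every point `x₀`, a continuous
`h : X → ℝ` whose minimizing sequences all converge to `x₀`, i.e. `h (uₙ) → h x₀` forces
`uₙ → x₀`. As `comap h (𝓝 (h x₀))` is countably generated, this sequential statement upgrades to
`𝓝 x₀ = comap h (𝓝 (h x₀))`: the topology at `x₀` is pulled back from `ℝ` by one continuous
function, and `ℝ` is completely regular and first countable.
-/

open Filter Topology BoundedContinuousFunction

section

variable {X Y : Type*} [TopologicalSpace X] [TopologicalSpace Y]

theorem StrongMinAt.tendsto_of_tendsto {g : X → EReal} {x₀ : X} (hg : StrongMinAt g x₀)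
    {u : ℕ → X} (hu : Tendsto (g ∘ u) atTop (𝓝 (g x₀))) : Tendsto u atTop (𝓝 x₀) := by
  have hinf : ⨅ x, g x = g x₀ := le_antisymm (iInf_le g x₀) (le_iInf hg.1)
  exact hg.2.2 u (hinf ▸ hu)

theorem nhds_eq_comap_of_forall_tendsto [FirstCountableTopology Y] {h : X → Y} {x₀ : X}
    (hc : Continuous h)
    (hseq : ∀ u : ℕ → X, Tendsto (h ∘ u) atTop (𝓝 (h x₀)) → Tendsto u atTop (𝓝 x₀)) :
    𝓝 x₀ = comap h (𝓝 (h x₀)) := by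
  refine le_antisymm (hc.tendsto x₀).le_comap ?_
  exact (tendsto_iff_seq_tendsto.2 fun u hu => hseq u (tendsto_comap_iff.1 hu) :
    Tendsto id (comap h (𝓝 (h x₀))) (𝓝 x₀))

theorem CompletelyRegularSpace.of_nhds_eq_comap [CompletelyRegularSpace Y]
    (H : ∀ x : X, ∃ h : X → Y, Continuous h ∧ 𝓝 x = comap h (𝓝 (h x))) :
    CompletelyRegularSpace X := by
  rw [completelyRegularSpace_iff_isOpen]
  intro x K hK hxK
  obtain ⟨h, hc, hx⟩ := H x
  obtain ⟨t, ht, htK⟩ := (hx ▸ hK.mem_nhds hxK : K ∈ comap h (𝓝 (h x)))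
  obtain ⟨V, hVt, hV, hxV⟩ := mem_nhds_iff.1 ht
  obtain ⟨g, hgc, hgx, hgV⟩ := CompletelyRegularSpace.completely_regular_isOpen _ V hV hxV
  exact ⟨g ∘ h, hgc.comp hc, hgx, fun y hy => hgV fun hyV => hy (htK (hVt hyV))⟩

theorem FirstCountableTopology.of_nhds_eq_comap [FirstCountableTopology Y]
    (H : ∀ x : X, ∃ h : X → Y, 𝓝 x = comap h (𝓝 (h x))) : FirstCountableTopology X where
  nhds_generated_countable x := by
    obtain ⟨h, hx⟩ := H x
    rw [hx]
    infer_instance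

end

theorem completelyRegular_and_firstCountable_of_strong_variational_principle_general
    {X : Type*} [TopologicalSpace X]
    (H : ∀ f : X → EReal, (∀ x, f x ≠ ⊥) → LowerSemicontinuous f →
      (∃ m : ℝ, ∀ x, (m : EReal) ≤ f x) → (∃ x, f x ≠ ⊤) →
      ∀ x₀ : X, f x₀ ≠ ⊤ → ∀ ε : ℝ, 0 < ε →
        ∃ h : X →ᵇ ℝ, (∀ x, 0 ≤ h x) ∧ h x₀ = 0 ∧
          ((‖h‖ : ℝ) : EReal) < f x₀ - (⨅ x, f x) + (ε : EReal) ∧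
          StrongMinAt (fun x => f x + (h x : EReal)) x₀) :
    CompletelyRegularSpace X ∧ FirstCountableTopology X := by
  have hloc : ∀ x₀ : X, ∃ h : X → ℝ, Continuous h ∧ 𝓝 x₀ = comap h (𝓝 (h x₀)) := by
    intro x₀
    obtain ⟨h, -, -, -, hmin⟩ := H 0 (fun _ => EReal.zero_ne_bot) lowerSemicontinuous_const
      ⟨0, fun _ => le_rfl⟩ ⟨x₀, EReal.zero_ne_top⟩ x₀ EReal.zero_ne_top 1 one_pos
    simp only [Pi.zero_apply, zero_add] at hmin
    exact ⟨h, h.continuous, nhds_eq_comap_of_forall_tendsto h.continuous fun u hu =>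
      hmin.tendsto_of_tendsto (EReal.tendsto_coe.2 hu)⟩
  exact ⟨.of_nhds_eq_comap hloc, .of_nhds_eq_comap fun x => (hloc x).imp fun _ => And.right⟩

/-- **Theorem 2.4.**  If in a Hausdorff space `X` the strong variational principle of
Kenderov–Revalski holds for every proper lower semicontinuous function bounded from
below, then `X` is a completely regular space satisfying the first axiom of
countability. -/
theorem completelyRegular_and_firstCountable_of_strong_variational_principle
    {X : Type*} [TopologicalSpace X] [T2Space X]
    (H : ∀ f : X → EReal, (∀ x, f x ≠ ⊥) → LowerSemicontinuous f →
      (∃ m : ℝ, ∀ x, (m : EReal) ≤ f x) → (∃ x, f x ≠ ⊤) →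
      ∀ x₀ : X, f x₀ ≠ ⊤ → ∀ ε : ℝ, 0 < ε →
        ∃ h : X →ᵇ ℝ, (∀ x, 0 ≤ h x) ∧ h x₀ = 0 ∧
          ((‖h‖ : ℝ) : EReal) < f x₀ - (⨅ x, f x) + (ε : EReal) ∧
          StrongMinAt (fun x => f x + (h x : EReal)) x₀) :
    CompletelyRegularSpace X ∧ FirstCountableTopology X :=
  completelyRegular_and_firstCountable_of_strong_variational_principle_general H
end

section
/- Let X be a Hausdorff topological space and suppose that for every x₀ ∈ X there exists a continuous bounded function h : X → ℝ₊ with h(x₀) = 0 that attains its strong minimum on X at x₀ (with min_X h = 0). Then for each x₀, the sets Lₙ := {x ∈ X : h(x) < 1/n}, n ≥ 1 (where h is the corresponding function for x₀), form a countable local base of neighbourhoods at x₀; in particular X satisfies the first axiom of countability. -/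
/-!
A continuous `g` with a strong minimum at `x₀` induces the topology at `x₀`:
`𝓝 x₀ = comap g (𝓝 (g x₀))`. One inclusion is continuity; the other holds because
`comap g (𝓝 (g x₀))` is countably generated, so it is enough to test it on sequences,
and a sequence converging to it is precisely a minimizing sequence. Pulling back the
basis of balls `ball (g x₀) (1 / n)` then gives the sublevel sets `Lₙ`.
-/

open Filter Topology BoundedContinuousFunction

/-- `x₀` is a strong minimum of the real-valued function `g` on `X`: `g` attains its
minimum on `X` uniquely at `x₀`, and every minimizing sequence converges to `x₀`. -/
def StrongMinAtReal {X : Type*} [TopologicalSpace X] (g : X → ℝ) (x₀ : X) : Prop :=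
  (∀ x, g x₀ ≤ g x) ∧ (∀ x, g x = g x₀ → x = x₀) ∧
  ∀ u : ℕ → X, Tendsto (fun n => g (u n)) atTop (𝓝 (⨅ x, g x)) →
    Tendsto u atTop (𝓝 x₀)

namespace StrongMinAtReal

variable {X : Type*} [TopologicalSpace X] {g : X → ℝ} {x₀ : X}

theorem iInf_eq (hg : StrongMinAtReal g x₀) : ⨅ x, g x = g x₀ :=
  have : Nonempty X := ⟨x₀⟩
  le_antisymm (ciInf_le ⟨g x₀, Set.forall_mem_range.2 hg.1⟩ x₀) (le_ciInf hg.1)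

theorem comap_nhds_le (hg : StrongMinAtReal g x₀) : comap g (𝓝 (g x₀)) ≤ 𝓝 x₀ :=
  tendsto_id'.1 <| tendsto_of_seq_tendsto fun u hu =>
    hg.2.2 u (hg.iInf_eq ▸ tendsto_comap_iff.1 hu)

theorem nhds_eq_comap (hg : StrongMinAtReal g x₀) (hc : ContinuousAt g x₀) :
    𝓝 x₀ = comap g (𝓝 (g x₀)) :=
  le_antisymm hc.tendsto.le_comap hg.comap_nhds_le

theorem nhds_hasBasis_sublevel (hg : StrongMinAtReal g x₀) (hc : ContinuousAt g x₀) :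
    (𝓝 x₀).HasBasis (fun n : ℕ => 0 < n) fun n => {x | g x < g x₀ + 1 / n} := by
  rw [hg.nhds_eq_comap hc]
  refine (Metric.nhds_basis_ball_inv_nat_pos.comap g).congr (fun _ => Iff.rfl) fun n _ => ?_
  ext x
  have hx := hg.1 x
  have hn : (0 : ℝ) < 1 / n := by positivity
  simp only [Set.mem_preimage, Metric.mem_ball, Real.dist_eq, abs_lt, Set.mem_ofPred_eq]
  exact ⟨fun h => by linarith [h.2], fun h => ⟨by linarith, by linarith⟩⟩

end StrongMinAtReal

theorem firstCountable_of_strong_minima_general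
    {X : Type*} [TopologicalSpace X]
    (H : ∀ x₀ : X, ∃ h : X →ᵇ ℝ, (∀ x, 0 ≤ h x) ∧ h x₀ = 0 ∧
      (⨅ x, h x) = 0 ∧ StrongMinAtReal (fun x => h x) x₀) :
    (∀ (x₀ : X) (h : X →ᵇ ℝ), (∀ x, 0 ≤ h x) → h x₀ = 0 →
      (⨅ x, h x) = 0 → StrongMinAtReal (fun x => h x) x₀ →
      (𝓝 x₀).HasBasis (fun n : ℕ => 0 < n) (fun n => {x | h x < 1 / (n : ℝ)})) ∧
    FirstCountableTopology X := by
  have basis (x₀ : X) (h : X →ᵇ ℝ) (hx₀ : h x₀ = 0) (hmin : StrongMinAtReal (fun x => h x) x₀) :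
      (𝓝 x₀).HasBasis (fun n : ℕ => 0 < n) (fun n => {x | h x < 1 / (n : ℝ)}) := by
    simpa only [hx₀, zero_add] using hmin.nhds_hasBasis_sublevel h.continuous.continuousAt
  refine ⟨fun x₀ h _ hx₀ _ hmin => basis x₀ h hx₀ hmin, ⟨fun x₀ => ?_⟩⟩
  obtain ⟨h, -, hx₀, -, hmin⟩ := H x₀
  exact (basis x₀ h hx₀ hmin).isCountablyGenerated

/-- **(Second part of the proof of Theorem 2.4.)**  Let `X` be Hausdorff and suppose
that for every `x₀ ∈ X` there is a continuous bounded `h : X → ℝ₊` with `h x₀ = 0`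
attaining its strong minimum on `X` at `x₀` (so `min_X h = 0`).  Then for each `x₀`
and each such corresponding `h`, the sets `Lₙ = {x : h x < 1/n}`, `n ≥ 1`, form a
countable local base of neighbourhoods at `x₀`; in particular `X` is first
countable. -/
theorem firstCountable_of_strong_minima
    {X : Type*} [TopologicalSpace X] [T2Space X]
    (H : ∀ x₀ : X, ∃ h : X →ᵇ ℝ, (∀ x, 0 ≤ h x) ∧ h x₀ = 0 ∧
      (⨅ x, h x) = 0 ∧ StrongMinAtReal (fun x => h x) x₀) :
    (∀ (x₀ : X) (h : X →ᵇ ℝ), (∀ x, 0 ≤ h x) → h x₀ = 0 →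
      (⨅ x, h x) = 0 → StrongMinAtReal (fun x => h x) x₀ →
      (𝓝 x₀).HasBasis (fun n : ℕ => 0 < n) (fun n => {x | h x < 1 / (n : ℝ)})) ∧
    FirstCountableTopology X :=
  firstCountable_of_strong_minima_general H
end

section
/- Let X and Y be completely regular Hausdorff topological spaces and f : X × Y → [−∞, +∞] satisfy assumptions (A1)–(A4). Let ε′ > 0, ε″ > 0, x₀ ∈ X and y₀ ∈ Y be such that v_f(x₀) > sup_{x∈X} v_f(x) − ε′ and w_f(y₀) < inf_{y∈Y} w_f(y) + ε″. Then there exist continuous bounded functions k : X → ℝ₊ and r : Y → ℝ₊ with k(x₀) = r(y₀) = 0, ‖k‖_∞ < 2ε′ + ε″ + Δ_f, ‖r‖_∞ < ε′ + 2ε″ + Δ_f, such that the function (x,y) ↦ f(x,y) − k(x) + r(y) has a saddle point at (x₀,y₀). -/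
open Filter Topology BoundedContinuousFunction

/-- `v_f(x) = inf_{y ∈ Y} f(x,y)`. -/
noncomputable def vmin {X Y : Type*} (f : X → Y → EReal) (x : X) : EReal := ⨅ y, f x y

/-- `w_f(y) = sup_{x ∈ X} f(x,y)`. -/
noncomputable def wmax {X Y : Type*} (f : X → Y → EReal) (y : Y) : EReal := ⨆ x, f x y

/-- `V_f = sup_{x ∈ X} v_f(x)`, the optimal value of the supinf problem. -/
noncomputable def Vval {X Y : Type*} (f : X → Y → EReal) : EReal := ⨆ x, vmin f x

/-- `W_f = inf_{y ∈ Y} w_f(y)`, the optimal value of the infsup problem. -/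
noncomputable def Wval {X Y : Type*} (f : X → Y → EReal) : EReal := ⨅ y, wmax f y

/-- (A1): for any `y ∈ Y` the function `f(·, y)` is upper semicontinuous. -/
def CondA1 {X Y : Type*} [TopologicalSpace X] (f : X → Y → EReal) : Prop :=
  ∀ y : Y, UpperSemicontinuous fun x => f x y

/-- (A2): `v_f` is bounded above on `X` and proper as a function with values in
`ℝ ∪ {-∞}` (i.e. finite at some point). -/
def CondA2 {X Y : Type*} (f : X → Y → EReal) : Prop :=
  (∃ M : ℝ, ∀ x, vmin f x ≤ (M : EReal)) ∧ ∃ x, vmin f x ≠ ⊥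

/-- (A3): for any `x ∈ X` the function `f(x, ·)` is lower semicontinuous. -/
def CondA3 {X Y : Type*} [TopologicalSpace Y] (f : X → Y → EReal) : Prop :=
  ∀ x : X, LowerSemicontinuous fun y => f x y

/-- (A4): `w_f` is bounded below on `Y` and proper as a function with values in
`ℝ ∪ {+∞}` (i.e. finite at some point). -/
def CondA4 {X Y : Type*} (f : X → Y → EReal) : Prop :=
  (∃ m : ℝ, ∀ y, (m : EReal) ≤ wmax f y) ∧ ∃ y, wmax f y ≠ ⊤

/-- `(x₀, y₀)` is a solution of the supinf problem for `f`:
`f(x₀,y₀) = inf_y f(x₀,y) = sup_x inf_y f(x,y)`. -/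
def SupinfSol {X Y : Type*} (f : X → Y → EReal) (x₀ : X) (y₀ : Y) : Prop :=
  f x₀ y₀ = vmin f x₀ ∧ vmin f x₀ = Vval f

/-- `(x₀, y₀)` is a solution of the infsup problem for `f`:
`f(x₀,y₀) = sup_x f(x,y₀) = inf_y sup_x f(x,y)`. -/
def InfsupSol {X Y : Type*} (f : X → Y → EReal) (x₀ : X) (y₀ : Y) : Prop :=
  f x₀ y₀ = wmax f y₀ ∧ wmax f y₀ = Wval f

/-- `(x₀, y₀)` is a saddle point of `f` on `X × Y`:
`f(x,y₀) ≤ f(x₀,y₀) ≤ f(x₀,y)` for all `x ∈ X`, `y ∈ Y`. -/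
def SaddlePt {X Y : Type*} (f : X → Y → EReal) (x₀ : X) (y₀ : Y) : Prop :=
  ∀ (x : X) (y : Y), f x y₀ ≤ f x₀ y₀ ∧ f x₀ y₀ ≤ f x₀ y

/-- `{(xₙ, yₙ)}` is an optimizing sequence for the saddle point problem for `f`:
`v_f(xₙ) → V_f`, `w_f(yₙ) → W_f` and `Δ_f = 0`. -/
def OptimizingSeq {X Y : Type*} (f : X → Y → EReal) (x : ℕ → X) (y : ℕ → Y) : Prop :=
  Tendsto (fun n => vmin f (x n)) atTop (𝓝 (Vval f)) ∧
  Tendsto (fun n => wmax f (y n)) atTop (𝓝 (Wval f)) ∧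
  Wval f - Vval f = 0

/-- The supinf problem for `f` is sup-well-posed with (unique) sup-solution `x₀`:
the problem `sup_X v_f` is well-posed with solution `x₀`. -/
def SupWellPosedAt {X Y : Type*} [TopologicalSpace X] (f : X → Y → EReal) (x₀ : X) : Prop :=
  vmin f x₀ = Vval f ∧ (∀ x, vmin f x = Vval f → x = x₀) ∧
  ∀ u : ℕ → X, Tendsto (fun n => vmin f (u n)) atTop (𝓝 (Vval f)) →
    Tendsto u atTop (𝓝 x₀)

/-- The infsup problem for `f` is inf-well-posed with (unique) inf-solution `y₀`:
the problem `inf_Y w_f` is well-posed with solution `y₀`. -/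
def InfWellPosedAt {X Y : Type*} [TopologicalSpace Y] (f : X → Y → EReal) (y₀ : Y) : Prop :=
  wmax f y₀ = Wval f ∧ (∀ y, wmax f y = Wval f → y = y₀) ∧
  ∀ u : ℕ → Y, Tendsto (fun n => wmax f (u n)) atTop (𝓝 (Wval f)) →
    Tendsto u atTop (𝓝 y₀)

/-- The saddle point problem for `f` is well-posed with unique solution `(x₀,y₀)`:
`(x₀,y₀)` is the unique saddle point of `f` and every optimizing sequence for the
saddle point problem converges to `(x₀,y₀)`. -/
def SPWellPosedAt {X Y : Type*} [TopologicalSpace X] [TopologicalSpace Y]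
    (f : X → Y → EReal) (x₀ : X) (y₀ : Y) : Prop :=
  SaddlePt f x₀ y₀ ∧ (∀ x y, SaddlePt f x y → x = x₀ ∧ y = y₀) ∧
  ∀ (x : ℕ → X) (y : ℕ → Y), OptimizingSeq f x y →
    Tendsto (fun n => (x n, y n)) atTop (𝓝 (x₀, y₀))

/-- The saddle point problem for `f` is well-posed. -/
def SPWellPosed {X Y : Type*} [TopologicalSpace X] [TopologicalSpace Y]
    (f : X → Y → EReal) : Prop :=
  ∃ x₀ y₀, SPWellPosedAt f x₀ y₀

lemma layered_bcf {X : Type*} [TopologicalSpace X] [CompletelyRegularSpace X]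
    (U : ℕ → Set X) (hUo : ∀ n, IsOpen (U n)) (x₀ : X) (hx₀ : ∀ n, x₀ ∈ U n)
    (B : ℝ) (hB : 0 < B) :
    ∃ k : X →ᵇ ℝ, (∀ x, 0 ≤ k x) ∧ k x₀ = 0 ∧ ‖k‖ ≤ B ∧
      ∀ (x : X) (m : ℕ), (∀ n, m ≤ n → x ∉ U n) → B * (1/2)^m ≤ k x := by
  have hg : ∀ n, ∃ g : X → unitInterval, Continuous g ∧ g x₀ = 0 ∧ Set.EqOn g 1 (U n)ᶜ := by
    intro n
    exact CompletelyRegularSpace.completely_regular x₀ (U n)ᶜ (hUo n).isClosed_compl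
      (by simpa using hx₀ n)
  choose g hgc hgx₀ hg1 using hg
  set c : ℕ → ℝ := fun n => B * (1/2)^(n+1) with hc
  have hcpos : ∀ n, 0 < c n := fun n => by positivity
  set φ : ℕ → X →ᵇ ℝ := fun n =>
    BoundedContinuousFunction.ofNormedAddCommGroup (fun x => c n * (g n x : ℝ))
      (by continuity) (c n)
      (fun x => by
        have h1 := (g n x).2.1
        have h2 := (g n x).2.2
        show ‖c n * (g n x : ℝ)‖ ≤ c n
        rw [Real.norm_eq_abs, abs_of_nonneg (by nlinarith [hcpos n])]
        nlinarith [hcpos n]) with hφ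
  have hφapp : ∀ n x, φ n x = c n * (g n x : ℝ) := fun n x => rfl
  have hφnorm : ∀ n, ‖φ n‖ ≤ c n := fun n =>
    BoundedContinuousFunction.norm_ofNormedAddCommGroup_le _ (le_of_lt (hcpos n)) _
  have hcsum : Summable c := by
    have h2 : Summable (fun n : ℕ => (B/2) * (1/2:ℝ)^n) :=
      (summable_geometric_of_lt_one (by norm_num : (0:ℝ) ≤ 1/2) (by norm_num)).mul_left (B/2)
    refine h2.congr fun n => ?_
    rw [hc]; ring
  have hφsum : Summable φ := by
    exact Summable.of_norm_bounded hcsum hφnorm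
  refine ⟨∑' n, φ n, ?_, ?_, ?_, ?_⟩
  · intro x
    have : (∑' n, φ n) x = ∑' n, φ n x := by
      have := (BoundedContinuousFunction.evalCLM (𝕜 := ℝ) (x := x)).map_tsum hφsum
      simpa using this
    rw [this]
    exact tsum_nonneg fun n => by
      have h1 := (g n x).2.1
      rw [hφapp]
      nlinarith [hcpos n]
  · have : (∑' n, φ n) x₀ = ∑' n, φ n x₀ := by
      have := (BoundedContinuousFunction.evalCLM (𝕜 := ℝ) (x := x₀)).map_tsum hφsum
      simpa using this
    rw [this]
    have : ∀ n, φ n x₀ = 0 := fun n => by simp [hφapp, hgx₀ n]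
    simp [this]
  · calc ‖∑' n, φ n‖ ≤ ∑' n, ‖φ n‖ := norm_tsum_le_tsum_norm (hcsum.of_nonneg_of_le (fun n => norm_nonneg _) hφnorm)
    _ ≤ ∑' n, c n := Summable.tsum_le_tsum hφnorm (hcsum.of_nonneg_of_le (fun n => norm_nonneg _) hφnorm) hcsum
    _ = B := by
        have : ∀ n, c n = B/2 * (1/2)^n := fun n => by rw [hc]; ring
        rw [tsum_congr this, tsum_mul_left, tsum_geometric_of_lt_one (by norm_num) (by norm_num)]
        norm_num
  · intro x m hm
    have hval : (∑' n, φ n) x = ∑' n, φ n x := by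
      have := (BoundedContinuousFunction.evalCLM (𝕜 := ℝ) (x := x)).map_tsum hφsum
      simpa using this
    have hsumx : Summable (fun n => φ n x) :=
      (hcsum.of_nonneg_of_le (fun n => norm_nonneg _) hφnorm).of_norm_bounded_eventually_nat
        (Eventually.of_forall fun n => (φ n).norm_coe_le_norm x)
    have htail : ∀ n, φ (n + m) x = c (n + m) := by
      intro n
      have hx1 : g (n+m) x = 1 := hg1 (n+m) (hm (n+m) (Nat.le_add_left m n))
      simp [hφapp, hx1]
    have hsplit := Summable.sum_add_tsum_nat_add (f := fun n => φ n x) m hsumx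
    have hhead : 0 ≤ ∑ i ∈ Finset.range m, φ i x := by
      apply Finset.sum_nonneg
      intro i _
      have h1 := (g i x).2.1
      simp only [hφapp]
      nlinarith [hcpos i]
    have htailval : ∑' n, φ (n + m) x = B * (1/2)^m := by
      rw [tsum_congr htail]
      have : ∀ n : ℕ, c (n + m) = (B/2 * (1/2)^m) * (1/2)^n := fun n => by
        rw [hc]; ring
      rw [tsum_congr this, tsum_mul_left, tsum_geometric_of_lt_one (by norm_num) (by norm_num)]
      ring
    rw [hval, ← hsplit]
    nlinarith [hhead, htailval.ge, htailval.le]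

lemma dominating_bcf {X : Type*} [TopologicalSpace X] [CompletelyRegularSpace X]
    (h : X → EReal) (x₀ : X) (a B : ℝ) (hB : 0 < B)
    (hUo : ∀ n : ℕ, IsOpen {x | h x < ((a + B * (1/2)^(n+1) : ℝ) : EReal)})
    (hhx₀ : h x₀ ≤ (a : EReal)) (hbd : ∀ x, h x < ((a + B : ℝ) : EReal)) :
    ∃ k : X →ᵇ ℝ, (∀ x, 0 ≤ k x) ∧ k x₀ = 0 ∧ ‖k‖ ≤ B ∧
      ∀ x, h x ≤ ((a + k x : ℝ) : EReal) := by
  classical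
  set c : ℕ → ℝ := fun n => B * (1/2)^(n+1) with hc
  have hcpos : ∀ n, 0 < c n := fun n => by positivity
  obtain ⟨k, hk0, hkx₀, hknorm, hklow⟩ :=
    layered_bcf (fun n => {x | h x < ((a + c n : ℝ) : EReal)}) hUo x₀
      (fun n => by
        show h x₀ < ((a + c n : ℝ) : EReal)
        refine lt_of_le_of_lt hhx₀ ?_
        exact_mod_cast (by nlinarith [hcpos n] : a < a + c n)) B hB
  refine ⟨k, hk0, hkx₀, hknorm, fun x => ?_⟩
  rcases le_or_gt (h x) ((a : ℝ) : EReal) with hle | hlt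
  · refine hle.trans ?_
    exact_mod_cast (by nlinarith [hk0 x] : a ≤ a + k x)
  · have hnetop : h x ≠ ⊤ := (hbd x).ne_top
    have hnebot : h x ≠ ⊥ := fun hb => by simp [hb] at hlt
    set t := (h x).toReal with htdef
    have ht : h x = (t : EReal) := (EReal.coe_toReal hnetop hnebot).symm
    have hat : a < t := by rw [ht] at hlt; exact_mod_cast hlt
    have htB : t < a + B := by
      have := hbd x; rw [ht] at this; exact_mod_cast this
    set s := t - a with hs
    have hspos : 0 < s := by simp [hs]; linarith
    have hsB : s < B := by simp [hs]; linarith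
    have hex : ∃ n, c n ≤ s := by
      obtain ⟨n, hn⟩ := exists_pow_lt_of_lt_one (div_pos hspos hB) (by norm_num : (1/2:ℝ) < 1)
      refine ⟨n, ?_⟩
      have h1 : (1/2:ℝ)^(n+1) ≤ (1/2:ℝ)^n :=
        pow_le_pow_of_le_one (by norm_num) (by norm_num) (Nat.le_succ n)
      have h2 : B * (1/2:ℝ)^n < s := by
        have := (mul_lt_mul_iff_right₀ hB).mpr hn
        rwa [mul_div_cancel₀ _ hB.ne'] at this
      calc c n ≤ B * (1/2:ℝ)^n := by
            rw [hc]; exact (mul_le_mul_iff_right₀ hB).mpr h1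
        _ ≤ s := h2.le
    set m := Nat.find hex with hm
    have hmono : ∀ n, m ≤ n → c n ≤ s := by
      intro n hn
      calc c n ≤ c m := by
            rw [hc]
            exact (mul_le_mul_iff_right₀ hB).mpr
              (pow_le_pow_of_le_one (by norm_num) (by norm_num) (Nat.succ_le_succ hn))
        _ ≤ s := Nat.find_spec hex
    have hnotmem : ∀ n, m ≤ n → x ∉ {x | h x < ((a + c n : ℝ) : EReal)} := by
      intro n hn hxmem
      have : t < a + c n := by
        have := hxmem; rw [Set.mem_setOf_eq, ht] at this; exact_mod_cast this
      have := hmono n hn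
      simp [hs] at hspos; nlinarith
    have hklx := hklow x m hnotmem
    have hsk : s ≤ k x := by
      rcases Nat.eq_zero_or_pos m with hm0 | hmpos
      · rw [hm0] at hklx; simp at hklx; linarith
      · have hnot : ¬ c (m - 1) ≤ s := Nat.find_min hex (Nat.sub_lt hmpos one_pos)
        push_neg at hnot
        have hm1 : m - 1 + 1 = m := by omega
        have : c (m-1) = B * (1/2)^m := by rw [hc]; simp only; rw [hm1]
        rw [this] at hnot
        linarith
    rw [ht]
    exact_mod_cast (by linarith : t ≤ a + k x)

/-- **Minimax variational principle** (Theorem 3.3). -/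
theorem saddle_point_variational_principle
    {X Y : Type*} [TopologicalSpace X] [T2Space X] [CompletelyRegularSpace X]
    [TopologicalSpace Y] [T2Space Y] [CompletelyRegularSpace Y]
    (f : X → Y → EReal) (hA1 : CondA1 f) (hA2 : CondA2 f) (hA3 : CondA3 f) (hA4 : CondA4 f)
    (ε' ε'' : ℝ) (hε' : 0 < ε') (hε'' : 0 < ε'') (x₀ : X) (y₀ : Y)
    (hx₀ : Vval f - (ε' : EReal) < vmin f x₀)
    (hy₀ : wmax f y₀ < Wval f + (ε'' : EReal)) :
    ∃ (k : X →ᵇ ℝ) (r : Y →ᵇ ℝ), (∀ x, 0 ≤ k x) ∧ (∀ y, 0 ≤ r y) ∧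
      k x₀ = 0 ∧ r y₀ = 0 ∧
      ((‖k‖ : ℝ) : EReal) < ((2 * ε' + ε'' : ℝ) : EReal) + (Wval f - Vval f) ∧
      ((‖r‖ : ℝ) : EReal) < ((ε' + 2 * ε'' : ℝ) : EReal) + (Wval f - Vval f) ∧
      SaddlePt (fun x y => f x y - (k x : EReal) + (r y : EReal)) x₀ y₀ := by
  obtain ⟨⟨M, hM⟩, x₁, hx₁⟩ := hA2
  obtain ⟨⟨mm, hmm⟩, y₁, hy₁⟩ := hA4
  -- finiteness of V and W
  have hVtop : Vval f ≠ ⊤ := ne_top_of_le_ne_top (EReal.coe_ne_top M) (iSup_le hM)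
  have hVbot : Vval f ≠ ⊥ := by
    intro hb
    exact hx₁ (le_bot_iff.1 (hb ▸ le_iSup (vmin f) x₁))
  have hWbot : Wval f ≠ ⊥ := by
    intro hb
    have h : (mm : EReal) ≤ Wval f := le_iInf hmm
    rw [hb, le_bot_iff] at h
    exact EReal.coe_ne_bot mm h
  have hWtop : Wval f ≠ ⊤ := by
    intro ht
    exact hy₁ (top_le_iff.1 (ht ▸ iInf_le (wmax f) y₁))
  have hVW : Vval f ≤ Wval f := by
    refine iSup_le fun x => le_iInf fun y => ?_
    exact le_trans (iInf_le _ y) (le_iSup (fun x' => f x' y) x)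
  set v := (Vval f).toReal with hvdef
  set w := (Wval f).toReal with hwdef
  have hV : Vval f = (v : EReal) := (EReal.coe_toReal hVtop hVbot).symm
  have hW : Wval f = (w : EReal) := (EReal.coe_toReal hWtop hWbot).symm
  have hvw : v ≤ w := by rw [hV, hW] at hVW; exact_mod_cast hVW
  have hWV : Wval f - Vval f = ((w - v : ℝ) : EReal) := by
    rw [hV, hW, ← EReal.coe_sub]
  -- f x₀ y₀ is finite
  have hvx₀ : ((v - ε' : ℝ) : EReal) < vmin f x₀ := by
    rw [EReal.coe_sub]; rw [hV] at hx₀; exact hx₀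
  have hwy₀ : wmax f y₀ < ((w + ε'' : ℝ) : EReal) := by
    rw [EReal.coe_add]; rw [hW] at hy₀; exact hy₀
  have hFlow : ((v - ε' : ℝ) : EReal) < f x₀ y₀ := lt_of_lt_of_le hvx₀ (iInf_le _ y₀)
  have hFhigh : f x₀ y₀ < ((w + ε'' : ℝ) : EReal) :=
    lt_of_le_of_lt (le_iSup (fun x => f x y₀) x₀) hwy₀
  set a := (f x₀ y₀).toReal with hadef
  have hFa : f x₀ y₀ = (a : EReal) := (EReal.coe_toReal hFhigh.ne_top
    (fun hb => by simp [hb] at hFlow)).symm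
  have ha1 : v - ε' < a := by rw [hFa] at hFlow; exact_mod_cast hFlow
  have ha2 : a < w + ε'' := by rw [hFa] at hFhigh; exact_mod_cast hFhigh
  set B := (w - v) + ε' + ε'' with hBdef
  have hBpos : 0 < B := by simp [hBdef]; linarith
  -- construct k
  obtain ⟨k, hk0, hkx₀, hknorm, hkdom⟩ :=
    dominating_bcf (fun x => f x y₀) x₀ a B hBpos
      (fun n => by
        have := upperSemicontinuous_iff_isOpen_preimage.1 (hA1 y₀)
          ((a + B * (1/2)^(n+1) : ℝ) : EReal)
        simpa [Set.preimage, Set.Iio] using this)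
      (le_of_eq hFa)
      (fun x => by
        refine lt_of_le_of_lt (le_trans (le_iSup (fun x' => f x' y₀) x) hwy₀.le) ?_
        exact_mod_cast (by simp [hBdef]; linarith : w + ε'' < a + B))
  -- construct r
  obtain ⟨r, hr0, hry₀, hrnorm, hrdom⟩ :=
    dominating_bcf (fun y => -(f x₀ y)) y₀ (-a) B hBpos
      (fun n => by
        have := lowerSemicontinuous_iff_isOpen_preimage.1 (hA3 x₀)
          (-((-a + B * (1/2)^(n+1) : ℝ) : EReal))
        have heq : {y | -(f x₀ y) < ((-a + B * (1/2)^(n+1) : ℝ) : EReal)} =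
            (fun y => f x₀ y) ⁻¹' Set.Ioi (-((-a + B * (1/2)^(n+1) : ℝ) : EReal)) := by
          ext y
          simp only [Set.mem_setOf_eq, Set.mem_preimage, Set.mem_Ioi]
          exact EReal.neg_lt_comm
        rw [heq]; exact this)
      (by show -(f x₀ y₀) ≤ ((-a : ℝ) : EReal)
          rw [hFa, EReal.coe_neg])
      (fun y => by
        have h1 : ((v - ε' : ℝ) : EReal) < f x₀ y := lt_of_lt_of_le hvx₀ (iInf_le _ y)
        have h2 : -(f x₀ y) < ((-(v - ε') : ℝ) : EReal) := by
          rw [EReal.coe_neg]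
          exact EReal.neg_lt_comm.1 (by rwa [neg_neg])
        show -(f x₀ y) < ((-a + B : ℝ) : EReal)
        refine h2.trans_le ?_
        exact_mod_cast (by simp [hBdef]; linarith : -(v - ε') ≤ -a + B))
  refine ⟨k, r, hk0, hr0, hkx₀, hry₀, ?_, ?_, ?_⟩
  · rw [hWV, ← EReal.coe_add, EReal.coe_lt_coe_iff]
    have hBe : B = (w - v) + ε' + ε'' := hBdef
    linarith [hknorm]
  · rw [hWV, ← EReal.coe_add, EReal.coe_lt_coe_iff]
    have hBe : B = (w - v) + ε' + ε'' := hBdef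
    linarith [hrnorm]
  · intro x y
    constructor
    · show f x y₀ - (k x : EReal) + ((r y₀ : ℝ) : EReal) ≤
        f x₀ y₀ - (k x₀ : EReal) + ((r y₀ : ℝ) : EReal)
      rw [hkx₀, hry₀, hFa]
      simp only [EReal.coe_zero, sub_zero, add_zero]
      have h1 : f x y₀ - (k x : EReal) ≤ ((a + k x : ℝ) : EReal) - (k x : EReal) :=
        EReal.sub_le_sub (hkdom x) (le_refl _)
      refine h1.trans ?_
      rw [← EReal.coe_sub]
      exact EReal.coe_le_coe_iff.2 (by linarith)
    · show f x₀ y₀ - (k x₀ : EReal) + ((r y₀ : ℝ) : EReal) ≤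
        f x₀ y - (k x₀ : EReal) + ((r y : ℝ) : EReal)
      rw [hkx₀, hry₀, hFa]
      simp only [EReal.coe_zero, sub_zero, add_zero]
      have h1 : -(f x₀ y) ≤ ((-a + r y : ℝ) : EReal) := hrdom y
      have h2 : ((a - r y : ℝ) : EReal) ≤ f x₀ y := by
        have heq : ((a - r y : ℝ) : EReal) = -((-a + r y : ℝ) : EReal) := by
          rw [← EReal.coe_neg]; exact congrArg _ (by ring)
        rw [heq]
        exact EReal.neg_le.2 h1
      calc ((a : ℝ) : EReal) = ((a - r y : ℝ) : EReal) + ((r y : ℝ) : EReal) := by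
            rw [← EReal.coe_add]; exact congrArg _ (by ring)
        _ ≤ f x₀ y + ((r y : ℝ) : EReal) := add_le_add_left h2 _
end

section
/- Let X and Y be completely regular Hausdorff topological spaces, f : X × Y → [−∞, +∞] satisfy assumptions (A1)–(A4), and Δ_f = 0. Let ε > 0 and let (x₀,y₀) ∈ X × Y be an ε-saddle point for f, i.e., v_f(x₀) > sup_{x∈X} v_f(x) − ε/3 and w_f(y₀) < inf_{y∈Y} w_f(y) + ε/3. Then there exist continuous bounded functions k : X → ℝ₊ and r : Y → ℝ₊ with k(x₀) = r(y₀) = 0, ‖k‖_∞ < ε, ‖r‖_∞ < ε, such that the function (x,y) ↦ f(x,y) − k(x) + r(y) has a saddle point at (x₀,y₀). -/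
open Filter Topology BoundedContinuousFunction

/-- Auxiliary: in a completely regular space, a lower semicontinuous `EReal`-valued
function bounded below by `c - s` and with value `≥ c` at a point `z₀` admits a
bounded continuous nonnegative "compensator" `r` with `r z₀ = 0`, `r ≤ s` and
`c ≤ ψ z + r z` everywhere. -/
lemma exists_dominating_aux {Z : Type*} [TopologicalSpace Z] [CompletelyRegularSpace Z]
    (ψ : Z → EReal) (hψ : LowerSemicontinuous ψ) (c s : ℝ) (hs : 0 < s)
    (hlow : ∀ z, ((c - s : ℝ) : EReal) < ψ z) (z₀ : Z) (hz₀ : (c : EReal) ≤ ψ z₀) :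
    ∃ r : Z →ᵇ ℝ, (∀ z, 0 ≤ r z) ∧ r z₀ = 0 ∧ (∀ z, r z ≤ s) ∧
      ∀ z, (c : EReal) ≤ ψ z + (r z : EReal) := by
  classical
  set w : ℕ → ℝ := fun n => s / 2 / 2 ^ n with hw
  have hwpos : ∀ n, 0 < w n := fun n => by positivity
  have hwles : ∀ n, w n ≤ s := by
    intro n
    have h1 : (1 : ℝ) ≤ 2 ^ n := one_le_pow₀ one_le_two
    show s / 2 / 2 ^ n ≤ s
    rw [div_div]
    refine div_le_self hs.le ?_
    nlinarith
  have hwanti : ∀ m n : ℕ, m ≤ n → w n ≤ w m := by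
    intro m n hmn
    have h2 : (2 : ℝ) ^ m ≤ 2 ^ n := pow_le_pow_right₀ one_le_two hmn
    exact div_le_div_of_nonneg_left (by positivity) (by positivity) h2
  -- closed sets where ψ is small
  set C : ℕ → Set Z := fun n => {z | ψ z ≤ ((c - w n : ℝ) : EReal)} with hCdef
  have hCclosed : ∀ n, IsClosed (C n) := fun n => hψ.isClosed_preimage _
  have hz₀C : ∀ n, z₀ ∉ C n := by
    intro n hz
    have h1 : ((c - w n : ℝ) : EReal) < (c : EReal) := by
      exact_mod_cast sub_lt_self c (hwpos n)
    exact absurd (le_trans hz₀ hz) (not_le.2 h1)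
  choose gI hgc hg0 hg1 using fun n =>
    CompletelyRegularSpace.completely_regular z₀ (C n) (hCclosed n) (hz₀C n)
  -- bump functions as bounded continuous functions
  have hmem01 : ∀ (n : ℕ) (z : Z), (0 : ℝ) ≤ (gI n z : ℝ) ∧ ((gI n z : ℝ)) ≤ 1 :=
    fun n z => ⟨(gI n z).2.1, (gI n z).2.2⟩
  set g : ℕ → (Z →ᵇ ℝ) := fun n =>
    ⟨⟨fun z => (gI n z : ℝ), continuous_subtype_val.comp (hgc n)⟩, 1, by
      intro x y
      rw [Real.dist_eq]
      have h1 := hmem01 n x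
      have h2 := hmem01 n y
      rw [abs_sub_le_iff]
      constructor <;> simp only [ContinuousMap.coe_mk] <;> linarith [h1.1, h1.2, h2.1, h2.2]⟩
    with hgdef
  have hg_apply : ∀ n z, g n z = (gI n z : ℝ) := fun n z => rfl
  have hg01 : ∀ n z, 0 ≤ g n z ∧ g n z ≤ 1 := fun n z => hmem01 n z
  have hgz₀ : ∀ n, g n z₀ = 0 := by
    intro n
    rw [hg_apply, hg0 n]
    rfl
  have hgone : ∀ n z, z ∈ C n → g n z = 1 := by
    intro n z hz
    rw [hg_apply, hg1 n hz]
    rfl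
  -- the series
  set F : ℕ → (Z →ᵇ ℝ) := fun n => w n • g n with hFdef
  have hgnorm : ∀ n, ‖g n‖ ≤ 1 := by
    intro n
    refine (BoundedContinuousFunction.norm_le zero_le_one).2 fun z => ?_
    rw [Real.norm_eq_abs, abs_le]
    exact ⟨by linarith [(hg01 n z).1], (hg01 n z).2⟩
  have hFnorm : ∀ n, ‖F n‖ ≤ w n := by
    intro n
    refine (BoundedContinuousFunction.norm_le (hwpos n).le).2 fun z => ?_
    have heq : F n z = w n * g n z := rfl
    rw [heq, Real.norm_eq_abs, abs_mul, abs_of_pos (hwpos n)]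
    calc w n * |g n z| ≤ w n * 1 := by
          refine mul_le_mul_of_nonneg_left ?_ (hwpos n).le
          rw [abs_le]
          exact ⟨by linarith [(hg01 n z).1], (hg01 n z).2⟩
    _ = w n := mul_one _
  have hFsum : Summable F := by
    refine Summable.of_norm_bounded (summable_geometric_two' s) ?_
    intro n
    exact hFnorm n
  set r : Z →ᵇ ℝ := ∑' n, F n with hrdef
  -- pointwise summability and evaluation
  have hptsum : ∀ z, Summable (fun n => w n * g n z) := by
    intro z
    refine Summable.of_nonneg_of_le (fun n => mul_nonneg (hwpos n).le (hg01 n z).1)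
      (fun n => ?_) (summable_geometric_two' s)
    calc w n * g n z ≤ w n * 1 := mul_le_mul_of_nonneg_left (hg01 n z).2 (hwpos n).le
    _ = w n := mul_one _
  have hr_apply : ∀ z, r z = ∑' n, w n * g n z := by
    intro z
    have h1 : (BoundedContinuousFunction.evalCLM (𝕜 := ℝ) z) (∑' n, F n)
        = ∑' n, (BoundedContinuousFunction.evalCLM (𝕜 := ℝ) z) (F n) :=
      ContinuousLinearMap.map_tsum _ hFsum
    have h2 : ∀ n, (BoundedContinuousFunction.evalCLM (𝕜 := ℝ) z) (F n) = w n * g n z :=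
      fun n => rfl
    calc r z = (BoundedContinuousFunction.evalCLM (𝕜 := ℝ) z) (∑' n, F n) := rfl
    _ = ∑' n, (BoundedContinuousFunction.evalCLM (𝕜 := ℝ) z) (F n) := h1
    _ = ∑' n, w n * g n z := tsum_congr h2
  have hr_nonneg : ∀ z, 0 ≤ r z := by
    intro z
    rw [hr_apply]
    exact tsum_nonneg fun n => mul_nonneg (hwpos n).le (hg01 n z).1
  have hr_z₀ : r z₀ = 0 := by
    rw [hr_apply]
    simp [hgz₀]
  have hr_le : ∀ z, r z ≤ s := by
    intro z
    rw [hr_apply]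
    calc ∑' n, w n * g n z ≤ ∑' n, w n := by
          refine Summable.tsum_le_tsum (fun n => ?_) (hptsum z) (summable_geometric_two' s)
          calc w n * g n z ≤ w n * 1 := mul_le_mul_of_nonneg_left (hg01 n z).2 (hwpos n).le
          _ = w n := mul_one _
    _ = s := tsum_geometric_two' s
  refine ⟨r, hr_nonneg, hr_z₀, hr_le, ?_⟩
  intro z
  by_cases hcz : (c : EReal) ≤ ψ z
  · calc (c : EReal) ≤ ψ z := hcz
    _ = ψ z + 0 := (add_zero _).symm
    _ ≤ ψ z + (r z : EReal) := by
        refine add_le_add_right ?_ _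
        exact_mod_cast hr_nonneg z
  · push_neg at hcz
    have hbot : ψ z ≠ ⊥ := ne_of_gt (lt_of_le_of_lt bot_le (hlow z))
    have htop : ψ z ≠ ⊤ := ne_of_lt (lt_of_lt_of_le hcz le_top)
    obtain ⟨p, hp⟩ : ∃ p : ℝ, ψ z = (p : EReal) := ⟨(ψ z).toReal, (EReal.coe_toReal htop hbot).symm⟩
    rw [hp] at hcz ⊢
    have h1 : c - s < p := by
      have := hlow z
      rw [hp] at this
      exact_mod_cast this
    have h2 : p < c := by exact_mod_cast hcz
    set φ : ℝ := c - p with hφdef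
    have hφpos : 0 < φ := by rw [hφdef]; linarith
    have hφlt : φ < s := by rw [hφdef]; linarith
    -- find the first level below φ
    have hex : ∃ n : ℕ, w n < φ := by
      obtain ⟨n, hn⟩ := exists_pow_lt_of_lt_one (show (0:ℝ) < 2 * φ / s by positivity)
        (show (1:ℝ)/2 < 1 by norm_num)
      refine ⟨n, ?_⟩
      have hpow : ((1:ℝ)/2) ^ n = 1 / 2 ^ n := by
        rw [div_pow, one_pow]
      rw [hpow] at hn
      have heq : w n = s / 2 * (1 / 2 ^ n) := by rw [hw]; ring
      rw [heq]
      calc s / 2 * (1 / 2 ^ n) < s / 2 * (2 * φ / s) :=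
          mul_lt_mul_of_pos_left hn (by positivity)
      _ = φ := by field_simp
    obtain ⟨m, hm, hmin⟩ : ∃ m : ℕ, w m < φ ∧ ∀ j, j < m → φ ≤ w j :=
      ⟨Nat.find hex, Nat.find_spec hex, fun j hj => not_lt.1 (Nat.find_min hex hj)⟩
    have hkey : φ ≤ s / 2 ^ m := by
      rcases Nat.eq_zero_or_pos m with hm0 | hm0
      · rw [hm0]
        simpa using hφlt.le
      · obtain ⟨j, rfl⟩ := Nat.exists_eq_succ_of_ne_zero hm0.ne'
        have := hmin j (Nat.lt_succ_self j)
        calc φ ≤ w j := this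
        _ = s / 2 ^ (j + 1) := by show s / 2 / 2 ^ j = s / 2 ^ (j + 1); ring
    have hmemC : ∀ n, m ≤ n → z ∈ C n := by
      intro n hn
      have h3 : w n < φ := lt_of_le_of_lt (hwanti m n hn) hm
      have h4 : p ≤ c - w n := by rw [hφdef] at h3; linarith
      rw [hCdef]
      simp only [Set.mem_setOf_eq, hp]
      exact_mod_cast h4
    have hlb : s / 2 ^ m ≤ r z := by
      rw [hr_apply]
      have hcongr : ∀ n : ℕ, (s / 2 ^ m) / 2 / 2 ^ n = w (n + m) * g (n + m) z := by
        intro n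
        rw [hgone (n + m) z (hmemC (n + m) (Nat.le_add_left m n)), mul_one]
        show s / 2 ^ m / 2 / 2 ^ n = s / 2 / 2 ^ (n + m)
        ring
      calc s / 2 ^ m = ∑' n : ℕ, (s / 2 ^ m) / 2 / 2 ^ n := (tsum_geometric_two' _).symm
      _ = ∑' n : ℕ, w (n + m) * g (n + m) z := tsum_congr hcongr
      _ ≤ ∑' n, w n * g n z := by
          refine Summable.tsum_le_tsum_of_inj (· + m) (add_left_injective m)
            (fun i _ => mul_nonneg (hwpos i).le (hg01 i z).1) (fun n => le_refl _)
            ?_ (hptsum z)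
          refine (hptsum z).comp_injective (add_left_injective m)
    have hfin : c ≤ p + r z := by
      have : φ ≤ r z := le_trans hkey hlb
      rw [hφdef] at this
      linarith
    calc (c : EReal) ≤ ((p + r z : ℝ) : EReal) := by exact_mod_cast hfin
    _ = (p : EReal) + (r z : EReal) := EReal.coe_add p (r z)

/-- **Theorem 3.5**: variational principle at an `ε`-saddle point when `Δ_f = 0`. -/
theorem saddle_point_variational_principle_eps
    {X Y : Type*} [TopologicalSpace X] [T2Space X] [CompletelyRegularSpace X]
    [TopologicalSpace Y] [T2Space Y] [CompletelyRegularSpace Y]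
    (f : X → Y → EReal) (hA1 : CondA1 f) (hA2 : CondA2 f) (hA3 : CondA3 f) (hA4 : CondA4 f)
    (hΔ : Wval f - Vval f = 0)
    (ε : ℝ) (hε : 0 < ε) (x₀ : X) (y₀ : Y)
    (hx₀ : Vval f - ((ε / 3 : ℝ) : EReal) < vmin f x₀)
    (hy₀ : wmax f y₀ < Wval f + ((ε / 3 : ℝ) : EReal)) :
    ∃ (k : X →ᵇ ℝ) (r : Y →ᵇ ℝ), (∀ x, 0 ≤ k x) ∧ (∀ y, 0 ≤ r y) ∧
      k x₀ = 0 ∧ r y₀ = 0 ∧ ‖k‖ < ε ∧ ‖r‖ < ε ∧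
      SaddlePt (fun x y => f x y - (k x : EReal) + (r y : EReal)) x₀ y₀ := by
  classical
  -- V and W are finite and equal
  obtain ⟨⟨M, hM⟩, ⟨x₁, hx₁⟩⟩ := hA2
  obtain ⟨⟨m, hm⟩, ⟨y₁, hy₁⟩⟩ := hA4
  have hVtop : Vval f ≠ ⊤ := by
    refine ne_of_lt (lt_of_le_of_lt (iSup_le hM) ?_)
    exact EReal.coe_lt_top M
  have hVbot : Vval f ≠ ⊥ := by
    intro h
    exact hx₁ (le_bot_iff.1 (h ▸ le_iSup (vmin f) x₁))
  have hWbot : Wval f ≠ ⊥ := by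
    refine ne_of_gt (lt_of_lt_of_le ?_ (le_iInf hm))
    exact EReal.bot_lt_coe m
  have hWtop : Wval f ≠ ⊤ := by
    intro h
    exact hy₁ (top_le_iff.1 (h ▸ iInf_le (wmax f) y₁))
  set V₀ : ℝ := (Vval f).toReal with hV₀def
  have hV : Vval f = (V₀ : EReal) := (EReal.coe_toReal hVtop hVbot).symm
  set W₀ : ℝ := (Wval f).toReal with hW₀def
  have hW' : Wval f = (W₀ : EReal) := (EReal.coe_toReal hWtop hWbot).symm
  have hWV : W₀ = V₀ := by
    rw [hV, hW'] at hΔ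
    have : ((W₀ - V₀ : ℝ) : EReal) = (0 : EReal) := by
      rw [EReal.coe_sub]; exact hΔ
    have h0 : W₀ - V₀ = 0 := by exact_mod_cast this
    linarith
  have hW : Wval f = (V₀ : EReal) := by rw [hW', hWV]
  -- the value c = f x₀ y₀ is finite
  have hvx₀ : ((V₀ - ε/3 : ℝ) : EReal) < vmin f x₀ := by
    rw [EReal.coe_sub, ← hV]
    exact hx₀
  have hwy₀ : wmax f y₀ < ((V₀ + ε/3 : ℝ) : EReal) := by
    rw [EReal.coe_add, ← hW]
    exact hy₀
  have hvlef : vmin f x₀ ≤ f x₀ y₀ := iInf_le _ y₀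
  have hflew : f x₀ y₀ ≤ wmax f y₀ := le_iSup (fun x => f x y₀) x₀
  have hfbot : f x₀ y₀ ≠ ⊥ := ne_of_gt (lt_of_le_of_lt bot_le (lt_of_lt_of_le hvx₀ hvlef))
  have hftop : f x₀ y₀ ≠ ⊤ := ne_of_lt (lt_of_le_of_lt hflew (lt_of_lt_of_le hwy₀ le_top))
  set c : ℝ := (f x₀ y₀).toReal with hcdef
  have hc : f x₀ y₀ = (c : EReal) := (EReal.coe_toReal hftop hfbot).symm
  have hclt : c < V₀ + ε/3 := by
    have := lt_of_le_of_lt hflew hwy₀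
    rw [hc] at this
    exact_mod_cast this
  have hcgt : V₀ - ε/3 < c := by
    have := lt_of_lt_of_le hvx₀ hvlef
    rw [hc] at this
    exact_mod_cast this
  -- construct r on Y
  have hsε : (0:ℝ) < 2*ε/3 := by linarith
  obtain ⟨r, hr_nonneg, hr_z₀, hr_le, hr_dom⟩ :=
    exists_dominating_aux (fun y => f x₀ y) (hA3 x₀) c (2*ε/3) hsε
      (by
        intro y
        have h1 : ((c - 2*ε/3 : ℝ) : EReal) < ((V₀ - ε/3 : ℝ) : EReal) := by
          exact_mod_cast (by linarith : c - 2*ε/3 < V₀ - ε/3)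
        calc ((c - 2*ε/3 : ℝ) : EReal) < ((V₀ - ε/3 : ℝ) : EReal) := h1
        _ < vmin f x₀ := hvx₀
        _ ≤ f x₀ y := iInf_le _ y)
      y₀ (le_of_eq hc.symm)
  -- construct k on X
  have hlscX : LowerSemicontinuous (fun x => -(f x y₀)) := by
    intro x b hb
    have hb' : f x y₀ < -b := EReal.lt_neg_of_lt_neg hb
    filter_upwards [hA1 y₀ x (-b) hb'] with x' hx'
    exact EReal.lt_neg_of_lt_neg hx'
  obtain ⟨k, hk_nonneg, hk_z₀, hk_le, hk_dom⟩ :=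
    exists_dominating_aux (fun x => -(f x y₀)) hlscX (-c) (2*ε/3) hsε
      (by
        intro x
        have h1 : f x y₀ < ((c + 2*ε/3 : ℝ) : EReal) := by
          have h2 : ((V₀ + ε/3 : ℝ) : EReal) ≤ ((c + 2*ε/3 : ℝ) : EReal) := by
            exact_mod_cast (by linarith : V₀ + ε/3 ≤ c + 2*ε/3)
          calc f x y₀ ≤ wmax f y₀ := le_iSup (fun x => f x y₀) x
          _ < ((V₀ + ε/3 : ℝ) : EReal) := hwy₀
          _ ≤ ((c + 2*ε/3 : ℝ) : EReal) := h2
        have h3 : -((c + 2*ε/3 : ℝ) : EReal) < -(f x y₀) := EReal.neg_lt_neg_iff.2 h1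
        calc ((-c - 2*ε/3 : ℝ) : EReal) = -((c + 2*ε/3 : ℝ) : EReal) := by
              rw [show (-c - 2*ε/3 : ℝ) = -(c + 2*ε/3) by ring, EReal.coe_neg]
        _ < -(f x y₀) := h3)
      x₀ (by
        show ((-c : ℝ) : EReal) ≤ -(f x₀ y₀)
        rw [hc, ← EReal.coe_neg])
  -- assemble
  have hknorm : ‖k‖ < ε := by
    have : ‖k‖ ≤ 2*ε/3 := by
      refine (BoundedContinuousFunction.norm_le (by linarith)).2 fun x => ?_
      rw [Real.norm_eq_abs, abs_le]
      exact ⟨by linarith [hk_nonneg x], hk_le x⟩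
    linarith
  have hrnorm : ‖r‖ < ε := by
    have : ‖r‖ ≤ 2*ε/3 := by
      refine (BoundedContinuousFunction.norm_le (by linarith)).2 fun y => ?_
      rw [Real.norm_eq_abs, abs_le]
      exact ⟨by linarith [hr_nonneg y], hr_le y⟩
    linarith
  refine ⟨k, r, hk_nonneg, hr_nonneg, hk_z₀, hr_z₀, hknorm, hrnorm, ?_⟩
  intro x y
  have hval : f x₀ y₀ - (k x₀ : EReal) + (r y₀ : EReal) = (c : EReal) := by
    rw [hc, hk_z₀, hr_z₀]
    simp
  constructor
  · -- f x y₀ - k x + r y₀ ≤ c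
    show f x y₀ - (k x : EReal) + (r y₀ : EReal) ≤ f x₀ y₀ - (k x₀ : EReal) + (r y₀ : EReal)
    rw [hval, hr_z₀]
    simp only [EReal.coe_zero, add_zero]
    -- show f x y₀ - k x ≤ c
    have hxtop : f x y₀ ≠ ⊤ := by
      refine ne_of_lt (lt_of_le_of_lt (le_iSup (fun x => f x y₀) x) ?_)
      exact lt_of_lt_of_le hwy₀ le_top
    by_cases hxbot : f x y₀ = ⊥
    · rw [hxbot]
      rw [sub_eq_add_neg, EReal.bot_add]
      exact bot_le
    · obtain ⟨a, ha⟩ : ∃ a : ℝ, f x y₀ = (a : EReal) :=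
        ⟨(f x y₀).toReal, (EReal.coe_toReal hxtop hxbot).symm⟩
      have hdom : ((-c : ℝ) : EReal) ≤ -(f x y₀) + (k x : EReal) := hk_dom x
      rw [ha, ← EReal.coe_neg, ← EReal.coe_add] at hdom
      have hdom' : -c ≤ -a + k x := by exact_mod_cast hdom
      rw [ha, ← EReal.coe_sub]
      exact_mod_cast (by linarith : a - k x ≤ c)
  · -- c ≤ f x₀ y - k x₀ + r y
    show f x₀ y₀ - (k x₀ : EReal) + (r y₀ : EReal) ≤ f x₀ y - (k x₀ : EReal) + (r y : EReal)
    rw [hval, hk_z₀]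
    simp only [EReal.coe_zero, sub_eq_add_neg, neg_zero, add_zero]
    exact hr_dom y
end

section
/- Let X and Y be completely regular Hausdorff topological spaces and let f : X × Y → [−∞, +∞] satisfy assumptions (A1)–(A4) and be additively separable, i.e., f(x,y) = f₁(x) + f₂(y). Then the set {(k,r) ∈ C(X) × C(Y) : the function (x,y) ↦ f(x,y) + k(x) + r(y) has a saddle point on X × Y} is dense in C(X) × C(Y). -/
open Filter Topology BoundedContinuousFunction

section AuxEReal

lemma auxSP_cancel_coe_right {a b : EReal} (c : ℝ) (h : a + (c : EReal) ≤ b + (c : EReal)) :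
    a ≤ b := by
  by_contra hlt
  push_neg at hlt
  exact absurd h (not_le.mpr (EReal.add_lt_add_right_coe hlt c))

lemma auxSP_cancel_coe_left {a b : EReal} (c : ℝ) (h : (c : EReal) + a ≤ (c : EReal) + b) :
    a ≤ b := by
  rw [add_comm (c : EReal) a, add_comm (c : EReal) b] at h
  exact auxSP_cancel_coe_right c h

lemma auxSP_neg_add_coe (A : EReal) (t : ℝ) : -(A + (t : EReal)) = -A + ((-t : ℝ) : EReal) := by
  induction A using EReal.rec with
  | bot =>
      rw [EReal.bot_add, EReal.neg_bot, EReal.top_add_of_ne_bot (EReal.coe_ne_bot _)]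
  | coe a =>
      simp only [← EReal.coe_neg, ← EReal.coe_add]
      exact_mod_cast (by ring : -(a + t) = -a + -t)
  | top =>
      rw [EReal.top_add_of_ne_bot (EReal.coe_ne_bot _), EReal.neg_top, EReal.bot_add]

lemma auxSP_coe_shuffle (A : EReal) (b t : ℝ) :
    (A + (b : EReal)) + (t : EReal) = (A + (t : EReal)) + (b : EReal) := by
  rw [add_assoc, add_assoc, ← EReal.coe_add, ← EReal.coe_add, add_comm b t]

lemma auxSP_usc_add_cont {Z : Type*} [TopologicalSpace Z] {φ : Z → EReal}
    (hφ : UpperSemicontinuous φ) {k : Z → ℝ} (hk : Continuous k) :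
    UpperSemicontinuous fun z => φ z + ((k z : ℝ) : EReal) := by
  intro x t ht
  replace ht : φ x + ((k x : ℝ) : EReal) < t := ht
  obtain ⟨ρ, κ, h1, h2, h3⟩ : ∃ ρ κ : ℝ, φ x < (ρ : EReal) ∧ k x < κ ∧
      ((ρ + κ : ℝ) : EReal) ≤ t := by
    obtain ⟨w, hw1, hw2⟩ := EReal.exists_between_coe_real ht
    by_cases hbot : φ x = ⊥
    · refine ⟨w - (k x + 1), k x + 1, by rw [hbot]; exact EReal.bot_lt_coe _, by linarith, ?_⟩
      rw [show w - (k x + 1) + (k x + 1) = w by ring]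
      exact hw2.le
    · have htop : φ x ≠ ⊤ := by
        intro htop
        rw [htop, EReal.top_add_of_ne_bot (EReal.coe_ne_bot _)] at hw1
        exact absurd hw1 (by simp)
      have hreal : ((φ x).toReal : EReal) = φ x := EReal.coe_toReal htop hbot
      set p := (φ x).toReal with hp
      have hpk : p + k x < w := by
        rw [← hreal, ← EReal.coe_add, EReal.coe_lt_coe_iff] at hw1
        exact hw1
      refine ⟨p + (w - p - k x) / 2, k x + (w - p - k x) / 2, ?_, by linarith, ?_⟩
      · rw [← hreal, EReal.coe_lt_coe_iff]; linarith
      · rw [show p + (w - p - k x) / 2 + (k x + (w - p - k x) / 2) = w by ring]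
        exact hw2.le
  have e1 := hφ x (ρ : EReal) h1
  have e2 : ∀ᶠ z in 𝓝 x, k z < κ := (hk.tendsto x).eventually_lt_const h2
  filter_upwards [e1, e2] with z hz1 hz2
  calc φ z + ((k z : ℝ) : EReal) ≤ (ρ : EReal) + (k z : EReal) :=
        add_le_add_left hz1.le _
    _ < ((ρ + κ : ℝ) : EReal) := by
        rw [← EReal.coe_add, EReal.coe_lt_coe_iff]; linarith
    _ ≤ t := h3

lemma auxSP_lsc_neg {Z : Type*} [TopologicalSpace Z] {g : Z → EReal}
    (hg : LowerSemicontinuous g) : UpperSemicontinuous fun z => -g z := by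
  intro x t ht
  have h1 : -t < g x := EReal.neg_lt_comm.mp ht
  filter_upwards [hg x _ h1] with z hz
  exact EReal.neg_lt_comm.mpr hz

lemma auxSP_geom_partial (c : ℝ) : ∀ n : ℕ,
    ∑ k ∈ Finset.range n, c * (1 / 2 : ℝ) ^ (k + 1) = c - c * (1 / 2 : ℝ) ^ n := by
  intro n
  induction n with
  | zero => simp
  | succ n ih => rw [Finset.sum_range_succ, ih, pow_succ]; ring

end AuxEReal

/-- Central attainment lemma: on a completely regular space, an usc, bounded above, proper
function can be perturbed by an arbitrarily small bounded continuous function so that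
the sum attains its supremum. -/
lemma auxSP_attain {Z : Type*} [TopologicalSpace Z] [CompletelyRegularSpace Z]
    (φ : Z → EReal) (hφ : UpperSemicontinuous φ) (M : ℝ) (hM : ∀ z, φ z ≤ (M : EReal))
    (z₁ : Z) (hz₁ : φ z₁ ≠ ⊥) (ε : ℝ) (hε : 0 < ε) :
    ∃ h : Z →ᵇ ℝ, ‖h‖ ≤ ε ∧ ∃ z₀ : Z, ∀ z, φ z + ((h z : ℝ) : EReal) ≤ φ z₀ + ((h z₀ : ℝ) : EReal) := by
  classical
  set S := ⨆ z, φ z with hS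
  by_cases hat : ∃ z₀, φ z₀ = S
  · obtain ⟨z₀, hz₀⟩ := hat
    refine ⟨0, by simp [hε.le], z₀, fun z => ?_⟩
    simp only [BoundedContinuousFunction.coe_zero, Pi.zero_apply, EReal.coe_zero, add_zero]
    rw [hz₀]
    exact le_iSup φ z
  · push_neg at hat
    have hlt : ∀ z, φ z < S := fun z => (le_iSup φ z).lt_of_ne (hat z)
    have hSne_top : S ≠ ⊤ := (lt_of_le_of_lt (iSup_le hM) (EReal.coe_lt_top M)).ne
    have hSne_bot : S ≠ ⊥ := by
      intro h
      exact hz₁ (le_bot_iff.mp (h ▸ le_iSup φ z₁))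
    set s := S.toReal with hs
    have hsS : (s : EReal) = S := EReal.coe_toReal hSne_top hSne_bot
    have h1 : ((s - ε : ℝ) : EReal) < S := by
      rw [← hsS, EReal.coe_lt_coe_iff]
      linarith
    obtain ⟨q, hq⟩ := lt_iSup_iff.mp h1
    have hqS : φ q < S := hlt q
    have hq_ne_bot : φ q ≠ ⊥ := by
      intro h
      rw [h] at hq
      exact absurd hq (by simp)
    have hq_ne_top : φ q ≠ ⊤ := hqS.ne_top
    set a := (φ q).toReal with ha
    have haq : (a : EReal) = φ q := EReal.coe_toReal hq_ne_top hq_ne_bot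
    have has : a < s := by
      rw [← EReal.coe_lt_coe_iff (x := a) (y := s), haq, hsS]
      exact hqS
    have hase : s - ε < a := by
      rw [← EReal.coe_lt_coe_iff (x := s - ε) (y := a), haq]
      exact hq
    set c := s - a with hc
    have hc0 : 0 < c := by rw [hc]; linarith
    have hcε : c < ε := by rw [hc]; linarith
    set U : ℕ → Set Z := fun n => {z | φ z < ((a + c * (1 / 2) ^ (n + 1) : ℝ) : EReal)} with hU
    have hUopen : ∀ n, IsOpen (U n) := fun n => hφ.isOpen_preimage _
    have hqU : ∀ n, q ∈ U n := by
      intro n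
      have : (0 : ℝ) < c * (1 / 2) ^ (n + 1) := by positivity
      show φ q < ((a + c * (1 / 2) ^ (n + 1) : ℝ) : EReal)
      rw [← haq, EReal.coe_lt_coe_iff]
      linarith
    have hUanti : ∀ m n : ℕ, m ≤ n → U n ⊆ U m := by
      intro m n hmn z hz
      have hzb : φ z < ((a + c * (1 / 2) ^ (n + 1) : ℝ) : EReal) := hz
      have hpow : (1 / 2 : ℝ) ^ (n + 1) ≤ (1 / 2 : ℝ) ^ (m + 1) :=
        pow_le_pow_of_le_one (by norm_num) (by norm_num) (Nat.succ_le_succ hmn)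
      show φ z < ((a + c * (1 / 2) ^ (m + 1) : ℝ) : EReal)
      refine hzb.trans_le ?_
      rw [EReal.coe_le_coe_iff]
      nlinarith
    have hbump : ∀ n : ℕ, ∃ g : Z → ℝ, Continuous g ∧ g q = 1 ∧ (∀ z, z ∉ U n → g z = 0) ∧
        ∀ z, 0 ≤ g z ∧ g z ≤ 1 := by
      intro n
      obtain ⟨f, hfc, hfq, hfK⟩ := CompletelyRegularSpace.completely_regular q (U n)ᶜ
        (hUopen n).isClosed_compl (by simp [hqU n])
      refine ⟨fun z => 1 - (f z : ℝ), continuous_const.sub (continuous_subtype_val.comp hfc),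
        by simp [hfq], fun z hz => ?_, fun z =>
          ⟨by show (0 : ℝ) ≤ 1 - (f z : ℝ); linarith [(f z).2.2],
           by show (1 - (f z : ℝ) : ℝ) ≤ 1; linarith [(f z).2.1]⟩⟩
      have : f z = 1 := hfK hz
      simp [this]
    choose g hgc hgq hg0 hg01 using hbump
    set coef : ℕ → ℝ := fun n => c * (1 / 2) ^ (n + 1) with hcoef
    have hcoef_pos : ∀ n, 0 < coef n := fun n => by positivity
    have hcoef_sum : Summable coef := by
      have hgeo : Summable (fun n : ℕ => (1 / 2 : ℝ) ^ n) :=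
        summable_geometric_of_lt_one (by norm_num) (by norm_num)
      have := hgeo.mul_left (c * (1 / 2))
      refine this.congr fun n => ?_
      show c * (1 / 2) * (1 / 2 : ℝ) ^ n = c * (1 / 2) ^ (n + 1)
      rw [pow_succ]
      ring
    have hcoef_tsum : ∑' n, coef n = c := by
      have : coef = fun n : ℕ => (c * (1 / 2)) * (1 / 2 : ℝ) ^ n := by
        funext n
        show c * (1 / 2) ^ (n + 1) = c * (1 / 2) * (1 / 2 : ℝ) ^ n
        rw [pow_succ]
        ring
      rw [this, tsum_mul_left, tsum_geometric_of_lt_one (by norm_num) (by norm_num)]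
      norm_num
      ring
    have habs : ∀ n z, ‖coef n * g n z‖ ≤ coef n := by
      intro n z
      rw [Real.norm_eq_abs, abs_mul, abs_of_pos (hcoef_pos n), abs_of_nonneg (hg01 n z).1]
      exact mul_le_of_le_one_right (hcoef_pos n).le (hg01 n z).2
    set b : ℕ → (Z →ᵇ ℝ) := fun n =>
      BoundedContinuousFunction.ofNormedAddCommGroup (fun z => coef n * g n z)
        (continuous_const.mul (hgc n)) (coef n) (habs n) with hb
    have hbnorm : ∀ n, ‖b n‖ ≤ coef n := fun n =>
      BoundedContinuousFunction.norm_ofNormedAddCommGroup_le _ (hcoef_pos n).le _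
    have hbsum : Summable b := Summable.of_norm_bounded hcoef_sum hbnorm
    set h : Z →ᵇ ℝ := ∑' n, b n with hh
    have heval : ∀ z, h z = ∑' n, coef n * g n z := by
      intro z
      have := ContinuousLinearMap.map_tsum (BoundedContinuousFunction.evalCLM ℝ z) hbsum
      rw [hh]
      convert this using 2
      all_goals rfl
    have hptsum : ∀ z, Summable fun n => coef n * g n z := fun z =>
      Summable.of_norm_bounded hcoef_sum (fun n => habs n z)
    have hq_eval : h q = c := by
      rw [heval q]
      have : (fun n => coef n * g n q) = coef := by
        funext n
        rw [hgq n, mul_one]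
      rw [this, hcoef_tsum]
    have hnorm : ‖h‖ ≤ ε := by
      have h1 : ‖h‖ ≤ ∑' n, ‖b n‖ :=
        norm_tsum_le_tsum_norm (Summable.of_nonneg_of_le (fun n => norm_nonneg _) hbnorm hcoef_sum)
      have h2 : ∑' n, ‖b n‖ ≤ ∑' n, coef n :=
        Summable.tsum_le_tsum hbnorm (Summable.of_nonneg_of_le (fun n => norm_nonneg _) hbnorm hcoef_sum)
          hcoef_sum
      rw [hcoef_tsum] at h2
      linarith [h1.trans h2]
    refine ⟨h, hnorm, q, fun z => ?_⟩
    have hRHS : φ q + ((h q : ℝ) : EReal) = (s : EReal) := by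
      rw [hq_eval, ← haq, ← EReal.coe_add]
      congr 1
      rw [hc]
      ring
    rw [hRHS]
    by_cases hall : ∀ n, z ∈ U n
    · have hφza : φ z ≤ (a : EReal) := by
        have htd : Tendsto (fun n : ℕ => ((a + c * (1 / 2) ^ (n + 1) : ℝ) : EReal)) atTop
            (𝓝 ((a : ℝ) : EReal)) := by
          rw [EReal.tendsto_coe]
          have hpow : Tendsto (fun n : ℕ => (1 / 2 : ℝ) ^ n) atTop (𝓝 0) :=
            tendsto_pow_atTop_nhds_zero_of_lt_one (by norm_num) (by norm_num)
          have h4 : Tendsto (fun n : ℕ => c * (1 / 2) ^ (n + 1)) atTop (𝓝 0) := by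
            have h3 := hpow.const_mul (c * (1 / 2))
            rw [mul_zero] at h3
            refine h3.congr fun n => ?_
            show c * (1 / 2) * (1 / 2 : ℝ) ^ n = c * (1 / 2) ^ (n + 1)
            rw [pow_succ]
            ring
          simpa using tendsto_const_nhds.add h4
        exact ge_of_tendsto htd (Eventually.of_forall fun n => (hall n).le)
      have hhzc : h z ≤ c := by
        rw [heval z]
        have h2 : ∑' n, coef n * g n z ≤ ∑' n, coef n := by
          refine Summable.tsum_le_tsum (fun n => ?_) (hptsum z) hcoef_sum
          exact mul_le_of_le_one_right (hcoef_pos n).le (hg01 n z).2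
        rw [hcoef_tsum] at h2
        exact h2
      calc φ z + ((h z : ℝ) : EReal) ≤ (a : EReal) + (c : EReal) :=
            add_le_add hφza (EReal.coe_le_coe_iff.mpr hhzc)
        _ = (s : EReal) := by rw [← EReal.coe_add]; congr 1; rw [hc]; ring
    · push_neg at hall
      have hex : ∃ n, z ∉ U n := hall
      set n₀ := Nat.find hex with hn₀
      have hzn : ∀ k, n₀ ≤ k → z ∉ U k := fun k hk hzk =>
        (Nat.find_spec hex) ((hUanti n₀ k hk) hzk)
      have hg_zero : ∀ k, n₀ ≤ k → g k z = 0 := fun k hk => hg0 k z (hzn k hk)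
      have hz_sum : h z = ∑ k ∈ Finset.range n₀, coef k * g k z := by
        rw [heval z]
        refine tsum_eq_sum fun k hk => ?_
        rw [hg_zero k (by simpa [Finset.mem_range, not_lt] using hk), mul_zero]
      have hpartial : h z ≤ c - c * (1 / 2) ^ n₀ := by
        rw [hz_sum]
        calc ∑ k ∈ Finset.range n₀, coef k * g k z ≤ ∑ k ∈ Finset.range n₀, coef k :=
              Finset.sum_le_sum fun k _ =>
                mul_le_of_le_one_right (hcoef_pos k).le (hg01 k z).2
          _ = c - c * (1 / 2) ^ n₀ := auxSP_geom_partial c n₀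
      rcases Nat.eq_zero_or_pos n₀ with h0 | hpos
      · have hzz : h z = 0 := by
          rw [hz_sum, h0]
          simp
        rw [hzz, EReal.coe_zero, add_zero]
        exact le_of_le_of_eq (le_iSup φ z) hsS.symm
      · obtain ⟨m, hm⟩ : ∃ m, n₀ = m + 1 := ⟨n₀ - 1, by omega⟩
        have hzUm : z ∈ U m := by
          by_contra hcon
          exact absurd (Nat.find_min hex (by omega : m < n₀)) (by simpa using hcon)
        have hφzb : φ z ≤ ((a + c * (1 / 2) ^ (m + 1) : ℝ) : EReal) := le_of_lt hzUm
        have hhzb : h z ≤ c - c * (1 / 2) ^ (m + 1) := by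
          rw [← hm]
          exact hpartial
        calc φ z + ((h z : ℝ) : EReal)
            ≤ ((a + c * (1 / 2) ^ (m + 1) : ℝ) : EReal) +
              ((c - c * (1 / 2) ^ (m + 1) : ℝ) : EReal) :=
              add_le_add hφzb (EReal.coe_le_coe_iff.mpr hhzb)
          _ = (s : EReal) := by
              rw [← EReal.coe_add]
              congr 1
              rw [hc]
              ring

/-- **Theorem 3.6**: dense variational principle for additively separable functions. -/
theorem dense_saddle_point_variational_principle
    {X Y : Type*} [TopologicalSpace X] [T2Space X] [CompletelyRegularSpace X]
    [TopologicalSpace Y] [T2Space Y] [CompletelyRegularSpace Y]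
    (f : X → Y → EReal) (hA1 : CondA1 f) (hA2 : CondA2 f) (hA3 : CondA3 f) (hA4 : CondA4 f)
    (f₁ : X → EReal) (f₂ : Y → EReal) (hsep : ∀ x y, f x y = f₁ x + f₂ y) :
    Dense {p : (X →ᵇ ℝ) × (Y →ᵇ ℝ) |
      ∃ (x₀ : X) (y₀ : Y),
        SaddlePt (fun x y => f x y + (p.1 x : EReal) + (p.2 y : EReal)) x₀ y₀} := by
  classical
  obtain ⟨⟨M, hM⟩, xb, hxb⟩ := hA2
  obtain ⟨⟨m, hm⟩, yb, hyb⟩ := hA4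
  by_cases hbot : ∃ y', f₂ y' = ⊥
  · obtain ⟨y', hy'⟩ := hbot
    intro p₀
    apply subset_closure
    refine ⟨xb, y', fun x y => ?_⟩
    have hb : ∀ x' : X, f x' y' + ((p₀.1 x' : ℝ) : EReal) + ((p₀.2 y' : ℝ) : EReal) = ⊥ := by
      intro x'
      rw [hsep, hy', EReal.add_bot, EReal.bot_add, EReal.bot_add]
    exact ⟨le_of_eq ((hb x).trans (hb xb).symm), le_of_eq_of_le (hb xb) bot_le⟩
  · push_neg at hbot
    by_cases htop : ∃ x', f₁ x' = ⊤
    · obtain ⟨x', hx'⟩ := htop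
      intro p₀
      apply subset_closure
      refine ⟨x', yb, fun x y => ?_⟩
      have ht : ∀ y'' : Y, f x' y'' + ((p₀.1 x' : ℝ) : EReal) + ((p₀.2 y'' : ℝ) : EReal) = ⊤ := by
        intro y''
        rw [hsep, hx', EReal.top_add_of_ne_bot (hbot y''),
          EReal.top_add_of_ne_bot (EReal.coe_ne_bot _),
          EReal.top_add_of_ne_bot (EReal.coe_ne_bot _)]
      exact ⟨le_top.trans_eq (ht yb).symm, (ht yb).le.trans (ht y).symm.le⟩
    · push_neg at htop
      -- basic finiteness facts
      have hvxb_ne_top : vmin f xb ≠ ⊤ := ((hM xb).trans_lt (EReal.coe_lt_top M)).ne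
      set v : ℝ := (vmin f xb).toReal with hv
      have hvcoe : (v : EReal) = vmin f xb := EReal.coe_toReal hvxb_ne_top hxb
      have hf1xb_ne_bot : f₁ xb ≠ ⊥ := by
        intro hcon
        apply hxb
        have h1 : vmin f xb ≤ f xb yb := iInf_le _ yb
        rw [hsep, hcon, EReal.bot_add] at h1
        exact le_bot_iff.mp h1
      have haxcoe : ((f₁ xb).toReal : EReal) = f₁ xb := EReal.coe_toReal (htop xb) hf1xb_ne_bot
      set ax : ℝ := (f₁ xb).toReal with hax
      have hwyb_ne_bot : wmax f yb ≠ ⊥ := by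
        intro hcon
        have h1 := hm yb
        rw [hcon] at h1
        exact (EReal.coe_ne_bot m) (le_bot_iff.mp h1)
      set w : ℝ := (wmax f yb).toReal with hw
      have hwcoe : (w : EReal) = wmax f yb := EReal.coe_toReal hyb hwyb_ne_bot
      have hf2yb_ne_top : f₂ yb ≠ ⊤ := by
        intro hcon
        apply hyb
        have h1 : f xb yb ≤ wmax f yb := le_iSup (fun x => f x yb) xb
        rw [hsep, hcon, EReal.add_top_of_ne_bot hf1xb_ne_bot] at h1
        exact top_le_iff.mp h1
      have hcycoe : ((f₂ yb).toReal : EReal) = f₂ yb := EReal.coe_toReal hf2yb_ne_top (hbot yb)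
      set cy : ℝ := (f₂ yb).toReal with hcy
      -- density via the metric characterization of closure
      intro p
      rw [Metric.mem_closure_iff]
      intro ε hε
      obtain ⟨k, r⟩ := p
      -- the sup side
      have husc1 : UpperSemicontinuous (fun x => f x yb + ((k x : ℝ) : EReal)) :=
        auxSP_usc_add_cont (hA1 yb) k.continuous
      have hbdd1 : ∀ x, f x yb + ((k x : ℝ) : EReal) ≤ ((w + ‖k‖ : ℝ) : EReal) := by
        intro x
        rw [EReal.coe_add]
        refine add_le_add (le_of_le_of_eq (le_iSup (fun x => f x yb) x) hwcoe.symm) ?_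
        rw [EReal.coe_le_coe_iff]
        exact (abs_le.mp (by simpa [Real.norm_eq_abs] using k.norm_coe_le_norm x)).2
      have hproper1 : f xb yb + ((k xb : ℝ) : EReal) ≠ ⊥ := by
        rw [hsep, ← haxcoe, ← hcycoe, ← EReal.coe_add, ← EReal.coe_add]
        exact EReal.coe_ne_bot _
      obtain ⟨h₁, hn₁, x₀, hx₀⟩ := auxSP_attain (fun x => f x yb + ((k x : ℝ) : EReal)) husc1
        (w + ‖k‖) hbdd1 xb hproper1 (ε / 2) (by linarith)
      -- the inf side
      have husc2 : UpperSemicontinuous (fun y => -(f xb y) + ((-(r y) : ℝ) : EReal)) :=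
        auxSP_usc_add_cont (auxSP_lsc_neg (hA3 xb)) r.continuous.neg
      have hbdd2 : ∀ y, -(f xb y) + ((-(r y) : ℝ) : EReal) ≤ ((‖r‖ - v : ℝ) : EReal) := by
        intro y
        have h1 : (v : EReal) ≤ f xb y := le_of_eq_of_le hvcoe (iInf_le _ y)
        have h2 : -(f xb y) ≤ ((-v : ℝ) : EReal) := by
          rw [EReal.coe_neg]
          exact EReal.neg_le_neg_iff.mpr h1
        have h3 : ((-(r y) : ℝ) : EReal) ≤ ((‖r‖ : ℝ) : EReal) := by
          rw [EReal.coe_le_coe_iff]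
          have h4 := (abs_le.mp (by simpa [Real.norm_eq_abs] using r.norm_coe_le_norm y)).1
          linarith
        calc -(f xb y) + ((-(r y) : ℝ) : EReal)
            ≤ ((-v : ℝ) : EReal) + ((‖r‖ : ℝ) : EReal) := add_le_add h2 h3
          _ = ((‖r‖ - v : ℝ) : EReal) := by rw [← EReal.coe_add]; congr 1; ring
      have hproper2 : -(f xb yb) + ((-(r yb) : ℝ) : EReal) ≠ ⊥ := by
        rw [hsep, ← haxcoe, ← hcycoe, ← EReal.coe_add, ← EReal.coe_neg, ← EReal.coe_add]
        exact EReal.coe_ne_bot _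
      obtain ⟨h₂, hn₂, y₀, hy₀⟩ := auxSP_attain (fun y => -(f xb y) + ((-(r y) : ℝ) : EReal))
        husc2 (‖r‖ - v) hbdd2 yb hproper2 (ε / 2) (by linarith)
      -- monotonicity facts for the perturbed marginals
      have key1 : ∀ u : X, f u yb + ((k u : ℝ) : EReal) + ((h₁ u : ℝ) : EReal)
          = (f₁ u + (((k + h₁) u : ℝ) : EReal)) + ((cy : ℝ) : EReal) := by
        intro u
        rw [hsep, ← hcycoe]
        rw [auxSP_coe_shuffle (f₁ u) cy (k u),
          auxSP_coe_shuffle (f₁ u + ((k u : ℝ) : EReal)) cy (h₁ u)]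
        congr 1
        rw [add_assoc, ← EReal.coe_add, BoundedContinuousFunction.add_apply]
      have P1 : ∀ x', f₁ x' + (((k + h₁) x' : ℝ) : EReal) ≤ f₁ x₀ + (((k + h₁) x₀ : ℝ) : EReal) := by
        intro x'
        have hx' : f x' yb + ((k x' : ℝ) : EReal) + ((h₁ x' : ℝ) : EReal)
            ≤ f x₀ yb + ((k x₀ : ℝ) : EReal) + ((h₁ x₀ : ℝ) : EReal) := hx₀ x'
        rw [key1 x', key1 x₀] at hx'
        exact auxSP_cancel_coe_right cy hx'
      have key2 : ∀ u : Y, -(f xb u) + ((-(r u) : ℝ) : EReal) + ((h₂ u : ℝ) : EReal)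
          = -(((ax : ℝ) : EReal) + (f₂ u + (((r - h₂) u : ℝ) : EReal))) := by
        intro u
        have e1 : -(f xb u) + ((-(r u) : ℝ) : EReal) + ((h₂ u : ℝ) : EReal)
            = -(f xb u) + ((-((r - h₂) u) : ℝ) : EReal) := by
          rw [add_assoc, ← EReal.coe_add]
          congr 2
          rw [BoundedContinuousFunction.sub_apply]
          ring
        rw [e1, ← auxSP_neg_add_coe (f xb u) ((r - h₂) u)]
        congr 1
        rw [hsep, ← haxcoe, add_assoc]
      have P2 : ∀ y', f₂ y₀ + (((r - h₂) y₀ : ℝ) : EReal) ≤ f₂ y' + (((r - h₂) y' : ℝ) : EReal) := by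
        intro y'
        have hy' : -(f xb y') + ((-(r y') : ℝ) : EReal) + ((h₂ y' : ℝ) : EReal)
            ≤ -(f xb y₀) + ((-(r y₀) : ℝ) : EReal) + ((h₂ y₀ : ℝ) : EReal) := hy₀ y'
        rw [key2 y', key2 y₀] at hy'
        exact auxSP_cancel_coe_left ax (EReal.neg_le_neg_iff.mp hy')
      have rearr : ∀ (x' : X) (y' : Y),
          f x' y' + (((k + h₁) x' : ℝ) : EReal) + (((r - h₂) y' : ℝ) : EReal)
            = (f₁ x' + (((k + h₁) x' : ℝ) : EReal)) + (f₂ y' + (((r - h₂) y' : ℝ) : EReal)) := by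
        intro x' y'
        rw [hsep, add_right_comm (f₁ x') (f₂ y'), add_assoc]
      refine ⟨(k + h₁, r - h₂), ⟨x₀, y₀, fun x y => ⟨?_, ?_⟩⟩, ?_⟩
      · show f x y₀ + (((k + h₁) x : ℝ) : EReal) + (((r - h₂) y₀ : ℝ) : EReal)
            ≤ f x₀ y₀ + (((k + h₁) x₀ : ℝ) : EReal) + (((r - h₂) y₀ : ℝ) : EReal)
        rw [rearr x y₀, rearr x₀ y₀]
        exact add_le_add_left (P1 x) _
      · show f x₀ y₀ + (((k + h₁) x₀ : ℝ) : EReal) + (((r - h₂) y₀ : ℝ) : EReal)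
            ≤ f x₀ y + (((k + h₁) x₀ : ℝ) : EReal) + (((r - h₂) y : ℝ) : EReal)
        rw [rearr x₀ y₀, rearr x₀ y]
        exact add_le_add_right (P2 y) _
      · rw [Prod.dist_eq]
        have d1 : dist k (k + h₁) = ‖h₁‖ := by
          rw [dist_eq_norm]
          have e : k - (k + h₁) = -h₁ := by abel
          rw [e, norm_neg]
        have d2 : dist r (r - h₂) = ‖h₂‖ := by
          rw [dist_eq_norm]
          have e : r - (r - h₂) = h₂ := by abel
          rw [e]
        rw [d1, d2]
        have : max ‖h₁‖ ‖h₂‖ ≤ ε / 2 := max_le hn₁ hn₂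
        linarith
end

section
/- Let X and Y be topological spaces and f : X × Y → [−∞, +∞] with Δ_f = 0 and V_f, W_f finite. Then the saddle point problem for f is well-posed if and only if the supinf problem for f is sup-well-posed and the infsup problem for f is inf-well-posed. -/
open Filter Topology BoundedContinuousFunction

/-! Weak duality `V_f ≤ W_f` shows that every saddle point consists of a solution of the supinf
problem and a solution of the infsup problem; when `V_f = W_f` the converse holds too. So
uniqueness of saddle points splits into uniqueness of the two solutions. An optimizing sequence
converges in `X × Y` iff both coordinates do, and a maximizing sequence `xₙ` of `v_f` becomes an
optimizing sequence `(xₙ, y₀)` once paired with the constant inf-solution `y₀`. -/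

theorem EReal.eq_of_sub_eq_zero {a b : EReal} (h : a - b = 0) : a = b := by
  induction a <;> induction b <;> simp_all
  exact_mod_cast sub_eq_zero.mp (EReal.coe_eq_zero.mp (by exact_mod_cast h))

section Duality

variable {X Y : Type*} {f : X → Y → EReal} {x : X} {y : Y}

theorem vmin_le_apply (f : X → Y → EReal) (x : X) (y : Y) : vmin f x ≤ f x y := iInf_le _ y

theorem apply_le_wmax (f : X → Y → EReal) (x : X) (y : Y) : f x y ≤ wmax f y :=
  le_iSup (fun x' => f x' y) x

theorem vmin_le_Vval (f : X → Y → EReal) (x : X) : vmin f x ≤ Vval f := le_iSup _ x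

theorem Wval_le_wmax (f : X → Y → EReal) (y : Y) : Wval f ≤ wmax f y := iInf_le _ y

theorem Vval_le_Wval (f : X → Y → EReal) : Vval f ≤ Wval f := iSup_iInf_le_iInf_iSup f

theorem SaddlePt.wmax_le_vmin (h : SaddlePt f x y) : wmax f y ≤ vmin f x :=
  (iSup_le fun x' => (h x' y).1).trans (le_iInf fun y' => (h x y').2)

theorem SaddlePt.vmin_eq_Vval (h : SaddlePt f x y) : vmin f x = Vval f :=
  (vmin_le_Vval f x).antisymm <|
    (Vval_le_Wval f).trans <| (Wval_le_wmax f y).trans h.wmax_le_vmin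

theorem SaddlePt.wmax_eq_Wval (h : SaddlePt f x y) : wmax f y = Wval f :=
  le_antisymm (h.wmax_le_vmin.trans <| (vmin_le_Vval f x).trans (Vval_le_Wval f))
    (Wval_le_wmax f y)

theorem saddlePt_of_vmin_eq_of_wmax_eq (hVW : Wval f = Vval f) (hx : vmin f x = Vval f)
    (hy : wmax f y = Wval f) : SaddlePt f x y := by
  have key : ∀ x' y', f x' y ≤ f x y' := fun x' y' =>
    calc f x' y ≤ wmax f y := apply_le_wmax f x' y
      _ = vmin f x := by rw [hy, hVW, hx]
      _ ≤ f x y' := vmin_le_apply f x y'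
  exact fun x' y' => ⟨key x' y, key x y'⟩

end Duality

section WellPosed

variable {X Y : Type*} [TopologicalSpace X] [TopologicalSpace Y] {f : X → Y → EReal}
  {x₀ : X} {y₀ : Y}

theorem SPWellPosedAt.supWellPosedAt (hΔ : Wval f - Vval f = 0) (h : SPWellPosedAt f x₀ y₀) :
    SupWellPosedAt f x₀ := by
  obtain ⟨hsaddle, huniq, hconv⟩ := h
  have hVW := EReal.eq_of_sub_eq_zero hΔ
  refine ⟨hsaddle.vmin_eq_Vval, fun x hx => ?_, fun u hu => ?_⟩
  · exact (huniq x y₀ <| saddlePt_of_vmin_eq_of_wmax_eq hVW hx hsaddle.wmax_eq_Wval).1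
  · have hy₀ : Tendsto (fun _ : ℕ => wmax f y₀) atTop (𝓝 (Wval f)) := by
      rw [hsaddle.wmax_eq_Wval]
      exact tendsto_const_nhds
    exact (continuous_fst.tendsto _).comp (hconv u (fun _ => y₀) ⟨hu, hy₀, hΔ⟩)

theorem SPWellPosedAt.infWellPosedAt (hΔ : Wval f - Vval f = 0) (h : SPWellPosedAt f x₀ y₀) :
    InfWellPosedAt f y₀ := by
  obtain ⟨hsaddle, huniq, hconv⟩ := h
  have hVW := EReal.eq_of_sub_eq_zero hΔ
  refine ⟨hsaddle.wmax_eq_Wval, fun y hy => ?_, fun u hu => ?_⟩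
  · exact (huniq x₀ y <| saddlePt_of_vmin_eq_of_wmax_eq hVW hsaddle.vmin_eq_Vval hy).2
  · have hx₀ : Tendsto (fun _ : ℕ => vmin f x₀) atTop (𝓝 (Vval f)) := by
      rw [hsaddle.vmin_eq_Vval]
      exact tendsto_const_nhds
    exact (continuous_snd.tendsto _).comp (hconv (fun _ => x₀) u ⟨hx₀, hu, hΔ⟩)

theorem SupWellPosedAt.spWellPosedAt (hVW : Wval f = Vval f) (hx : SupWellPosedAt f x₀)
    (hy : InfWellPosedAt f y₀) : SPWellPosedAt f x₀ y₀ := by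
  obtain ⟨hx₀, hxuniq, hxconv⟩ := hx
  obtain ⟨hy₀, hyuniq, hyconv⟩ := hy
  refine ⟨saddlePt_of_vmin_eq_of_wmax_eq hVW hx₀ hy₀, fun x y h => ?_, fun x y h => ?_⟩
  · exact ⟨hxuniq x h.vmin_eq_Vval, hyuniq y h.wmax_eq_Wval⟩
  · exact (hxconv x h.1).prodMk_nhds (hyconv y h.2.1)

end WellPosed

theorem spWellPosed_iff_supWellPosed_and_infWellPosed_general
    {X Y : Type*} [TopologicalSpace X] [TopologicalSpace Y]
    (f : X → Y → EReal) (hΔ : Wval f - Vval f = 0) :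
    SPWellPosed f ↔ (∃ x₀, SupWellPosedAt f x₀) ∧ (∃ y₀, InfWellPosedAt f y₀) := by
  constructor
  · rintro ⟨x₀, y₀, h⟩
    exact ⟨⟨x₀, h.supWellPosedAt hΔ⟩, ⟨y₀, h.infWellPosedAt hΔ⟩⟩
  · rintro ⟨⟨x₀, hx⟩, ⟨y₀, hy⟩⟩
    exact ⟨x₀, y₀, hx.spWellPosedAt (EReal.eq_of_sub_eq_zero hΔ) hy⟩

/-- The saddle point problem for `f` is well-posed iff the supinf problem is
sup-well-posed and the infsup problem is inf-well-posed (given `Δ_f = 0` and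
`V_f`, `W_f` finite). -/
theorem spWellPosed_iff_supWellPosed_and_infWellPosed
    {X Y : Type*} [TopologicalSpace X] [TopologicalSpace Y]
    (f : X → Y → EReal) (hΔ : Wval f - Vval f = 0)
    (hV : Vval f ≠ ⊥ ∧ Vval f ≠ ⊤) (hW : Wval f ≠ ⊥ ∧ Wval f ≠ ⊤) :
    SPWellPosed f ↔ (∃ x₀, SupWellPosedAt f x₀) ∧ (∃ y₀, InfWellPosedAt f y₀) :=
  spWellPosed_iff_supWellPosed_and_infWellPosed_general f hΔ
end

section
/- Let X and Y be completely regular Hausdorff topological spaces, f : X × Y → [−∞, +∞] satisfy assumptions (A1)–(A4), let ε′, ε″ > 0, x₀ ∈ X, y₀ ∈ Y satisfy v_f(x₀) > sup_X v_f − ε′ and w_f(y₀) < inf_Y w_f + ε″, and let k : X → ℝ₊, r : Y → ℝ₊ be continuous bounded functions with k(x₀) = r(y₀) = 0 such that (x,y) ↦ f(x,y) − k(x) + r(y) has a saddle point at (x₀,y₀). Suppose moreover that x₀ has a countable local base in X and y₀ has a countable local base in Y. Then for every δ > 0 there exist continuous bounded functions k′ : X → ℝ₊ and r′ : Y → ℝ₊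 with k′(x₀) = r′(y₀) = 0, ‖k′‖_∞ < δ, ‖r′‖_∞ < δ, such that for the function g(x,y) := f(x,y) − k(x) + r(y) − k′(x) + r′(y): (a) the supinf problem for g is sup-well-posed with unique sup-solution x₀; (b) the infsup problem for g is inf-well-posed with unique inf-solution y₀; and (c) the saddle point problem for g is well-posed with unique solution (x₀,y₀). -/
open Filter Topology BoundedContinuousFunction

open unitInterval in
lemma exists_forcing {X : Type*} [TopologicalSpace X] [T2Space X] [CompletelyRegularSpace X]
    (x₀ : X) (hb : (𝓝 x₀).IsCountablyGenerated) (δ : ℝ) (hδ : 0 < δ) :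
    ∃ k' : X →ᵇ ℝ, (∀ x, 0 ≤ k' x) ∧ k' x₀ = 0 ∧ ‖k'‖ < δ ∧ (∀ x, k' x = 0 → x = x₀) ∧
      ∀ u : ℕ → X, Tendsto (fun n => k' (u n)) atTop (𝓝 0) →
        Tendsto u atTop (𝓝 x₀) := by
  obtain ⟨U, hU⟩ := (𝓝 x₀).exists_antitone_basis
  have hmem : ∀ n, x₀ ∈ interior (U n) := fun n =>
    mem_interior_iff_mem_nhds.2 (hU.toHasBasis.mem_of_mem trivial)
  have hcl : ∀ n, IsClosed (interior (U n))ᶜ := fun n => isOpen_interior.isClosed_compl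
  choose F hFc hF0 hF1 using fun n =>
    CompletelyRegularSpace.completely_regular x₀ (interior (U n))ᶜ (hcl n) (by simp [hmem n])
  set c : ℕ → ℝ := fun n => (1/2:ℝ)^(n+1) with hc
  have hcpos : ∀ n, 0 < c n := fun n => by positivity
  have hcsum : Summable c := by
    have := (summable_geometric_of_lt_one (by norm_num : (0:ℝ) ≤ 1/2) (by norm_num)).mul_right (1/2)
    simpa [hc, pow_succ] using this
  have hcsum_eq : ∑' n, c n = 1 := by
    have h2 : ∑' n : ℕ, (1/2:ℝ)^n = 2 := by
      rw [tsum_geometric_of_lt_one (by norm_num) (by norm_num)]; norm_num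
    calc ∑' n, c n = ∑' n : ℕ, (1/2:ℝ)^n * (1/2) := by simp [hc, pow_succ]
      _ = (∑' n : ℕ, (1/2:ℝ)^n) * (1/2) := tsum_mul_right
      _ = 1 := by rw [h2]; norm_num
  set T : ℕ → X → ℝ := fun n x => c n * (F n x : ℝ) with hT
  have hT0 : ∀ n x, 0 ≤ T n x := fun n x => mul_nonneg (hcpos n).le (F n x).2.1
  have hTle : ∀ n x, T n x ≤ c n := fun n x => by
    have h1 : (F n x : ℝ) ≤ 1 := (F n x).2.2
    calc T n x = c n * (F n x : ℝ) := rfl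
      _ ≤ c n * 1 := mul_le_mul_of_nonneg_left h1 (hcpos n).le
      _ = c n := mul_one _
  have hTsum : ∀ x, Summable fun n => T n x := fun x =>
    hcsum.of_nonneg_of_le (fun n => hT0 n x) (fun n => hTle n x)
  set S : X → ℝ := fun x => ∑' n, T n x with hS
  have hScont : Continuous S := by
    apply continuous_tsum (fun n => ?_) hcsum (fun n x => ?_)
    · exact continuous_const.mul (continuous_subtype_val.comp (hFc n))
    · rw [Real.norm_eq_abs, abs_of_nonneg (hT0 n x)]; exact hTle n x
  have hS0 : ∀ x, 0 ≤ S x := fun x => tsum_nonneg (fun n => hT0 n x)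
  have hS1 : ∀ x, S x ≤ 1 := fun x => by
    rw [hS, ← hcsum_eq]
    exact Summable.tsum_le_tsum (fun n => hTle n x) (hTsum x) hcsum
  have hSx₀ : S x₀ = 0 := by
    have h : ∀ n, T n x₀ = 0 := fun n => by simp [hT, hF0 n]
    simp [hS, h]
  have hSterm : ∀ n x, T n x ≤ S x := fun n x =>
    Summable.le_tsum (hTsum x) n (fun j _ => hT0 j x)
  have hint : ∀ n x, T n x < c n → x ∈ U n := by
    intro n x hx
    by_contra hxU
    have hxc : x ∈ (interior (U n))ᶜ := fun hi => hxU (interior_subset hi)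
    have h1 : (F n x : ℝ) = 1 := by simp [hF1 n hxc]
    have h2 : T n x = c n := by
      calc T n x = c n * (F n x : ℝ) := rfl
        _ = c n := by rw [h1, mul_one]
    rw [h2] at hx; exact lt_irrefl _ hx
  have hcont : Continuous fun x => (δ/2) * S x := continuous_const.mul hScont
  have hbound : ∀ x y : X, dist ((δ/2) * S x) ((δ/2) * S y) ≤ δ := by
    intro x y
    rw [Real.dist_eq, abs_le]
    have := hS0 x; have := hS1 x; have := hS0 y; have := hS1 y
    constructor <;> nlinarith
  set k' : X →ᵇ ℝ := ⟨⟨fun x => (δ/2) * S x, hcont⟩, δ, hbound⟩ with hk'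
  have hk'app : ∀ x, k' x = (δ/2) * S x := fun x => rfl
  refine ⟨k', ?_, ?_, ?_, ?_, ?_⟩
  · intro x; rw [hk'app]; exact mul_nonneg (by linarith) (hS0 x)
  · rw [hk'app, hSx₀, mul_zero]
  · have : ‖k'‖ ≤ δ/2 := by
      rw [BoundedContinuousFunction.norm_le (by linarith)]
      intro x
      rw [hk'app, Real.norm_eq_abs, abs_of_nonneg (mul_nonneg (by linarith) (hS0 x))]
      have := hS1 x; nlinarith
    linarith
  · intro x hx
    rw [hk'app] at hx
    have hSx : S x = 0 := by
      have := hS0 x; nlinarith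
    by_contra hne
    have hmem' : {x}ᶜ ∈ 𝓝 x₀ := isOpen_compl_singleton.mem_nhds (by simp [Ne.symm hne])
    obtain ⟨n, -, hn⟩ := hU.toHasBasis.mem_iff.1 hmem'
    have hxn : x ∈ U n := by
      apply hint n x
      have h1 : T n x ≤ 0 := hSx ▸ hSterm n x
      have h2 : T n x = 0 := le_antisymm h1 (hT0 n x)
      rw [h2]; exact hcpos n
    exact hn hxn rfl
  · intro u hu
    rw [hU.toHasBasis.tendsto_right_iff]
    intro n _
    have hu' : Tendsto (fun j => (δ/2) * S (u j)) atTop (𝓝 0) := hu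
    have hev : ∀ᶠ j in atTop, (δ/2) * S (u j) < (δ/2) * c n := by
      refine hu'.eventually (gt_mem_nhds ?_)
      positivity
    filter_upwards [hev] with j hj
    refine hint n (u j) ?_
    have h1 : (δ/2) * T n (u j) ≤ (δ/2) * S (u j) :=
      mul_le_mul_of_nonneg_left (hSterm n (u j)) (by linarith)
    nlinarith

lemma er_sub_le_sub' {a b : EReal} (c : ℝ) (h : a ≤ b) : a - (c:EReal) ≤ b - (c:EReal) :=
  EReal.sub_le_sub h le_rfl
lemma er_sub_le {a : EReal} {c : ℝ} (h : 0 ≤ c) : a - (c:EReal) ≤ a := by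
  calc a - (c:EReal) ≤ a - (0:EReal) := EReal.sub_le_sub le_rfl (by exact_mod_cast h)
    _ = a := by rw [sub_zero]
lemma er_le_add {a : EReal} {c : ℝ} (h : 0 ≤ c) : a ≤ a + (c:EReal) := by
  calc a = a + 0 := by rw [add_zero]
    _ ≤ a + (c:EReal) := add_le_add le_rfl (by exact_mod_cast h)
lemma er_add_le_add' {a b : EReal} (c : ℝ) (h : a ≤ b) : a + (c:EReal) ≤ b + (c:EReal) :=
  add_le_add h le_rfl
lemma er_sub_ne_bot {a : EReal} (h : a ≠ ⊥) (c : ℝ) : a - (c:EReal) ≠ ⊥ := by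
  rw [sub_eq_add_neg, ← EReal.coe_neg]
  simp [EReal.add_eq_bot_iff, h]
lemma er_add_lt_top' {a : EReal} (h : a ≠ ⊤) (c : ℝ) : a + (c:EReal) < ⊤ :=
  EReal.add_lt_top h (by simp)


/-- **Theorem 4.3**: well-posedness of the perturbed saddle point problem. -/
theorem saddle_point_wellPosed_perturbation
    {X Y : Type*} [TopologicalSpace X] [T2Space X] [CompletelyRegularSpace X]
    [TopologicalSpace Y] [T2Space Y] [CompletelyRegularSpace Y]
    (f : X → Y → EReal) (hA1 : CondA1 f) (hA2 : CondA2 f) (hA3 : CondA3 f) (hA4 : CondA4 f)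
    (ε' ε'' : ℝ) (hε' : 0 < ε') (hε'' : 0 < ε'') (x₀ : X) (y₀ : Y)
    (hx₀ : Vval f - (ε' : EReal) < vmin f x₀)
    (hy₀ : wmax f y₀ < Wval f + (ε'' : EReal))
    (k : X →ᵇ ℝ) (r : Y →ᵇ ℝ) (hk0 : ∀ x, 0 ≤ k x) (hr0 : ∀ y, 0 ≤ r y)
    (hkx₀ : k x₀ = 0) (hry₀ : r y₀ = 0)
    (hsp : SaddlePt (fun x y => f x y - (k x : EReal) + (r y : EReal)) x₀ y₀)
    (hbx : (𝓝 x₀).IsCountablyGenerated) (hby : (𝓝 y₀).IsCountablyGenerated)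
    (δ : ℝ) (hδ : 0 < δ) :
    ∃ (k' : X →ᵇ ℝ) (r' : Y →ᵇ ℝ), (∀ x, 0 ≤ k' x) ∧ (∀ y, 0 ≤ r' y) ∧
      k' x₀ = 0 ∧ r' y₀ = 0 ∧ ‖k'‖ < δ ∧ ‖r'‖ < δ ∧
      SupWellPosedAt
        (fun x y => f x y - (k x : EReal) + (r y : EReal) - (k' x : EReal) + (r' y : EReal)) x₀ ∧
      InfWellPosedAt
        (fun x y => f x y - (k x : EReal) + (r y : EReal) - (k' x : EReal) + (r' y : EReal)) y₀ ∧
      SPWellPosedAt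
        (fun x y => f x y - (k x : EReal) + (r y : EReal) - (k' x : EReal) + (r' y : EReal)) x₀ y₀ := by
  obtain ⟨k', hk'0, hk'x₀, hk'n, hk'uniq, hk'conv⟩ := exists_forcing x₀ hbx δ hδ
  obtain ⟨r', hr'0, hr'y₀, hr'n, hr'uniq, hr'conv⟩ := exists_forcing y₀ hby δ hδ
  set h : X → Y → EReal := fun x y => f x y - (k x : EReal) + (r y : EReal) with hh
  set g : X → Y → EReal := fun x y => h x y - (k' x : EReal) + (r' y : EReal) with hgdef
  have hsp' : ∀ x y, h x y₀ ≤ h x₀ y₀ ∧ h x₀ y₀ ≤ h x₀ y := hsp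
  have hVf : h x₀ y₀ = f x₀ y₀ := by simp [hh, hkx₀, hry₀]
  have hVbot : h x₀ y₀ ≠ ⊥ := by
    obtain ⟨x₁, hx₁⟩ := hA2.2
    have h1 : vmin f x₁ ≤ Vval f := le_iSup _ x₁
    have hV' : Vval f ≠ ⊥ := fun hb => hx₁ (le_antisymm (hb ▸ h1) bot_le)
    have h2 : (⊥:EReal) < Vval f - (ε':EReal) := bot_lt_iff_ne_bot.2 (er_sub_ne_bot hV' ε')
    have h3 : (⊥:EReal) < vmin f x₀ := h2.trans hx₀
    have h4 : vmin f x₀ ≤ f x₀ y₀ := iInf_le _ y₀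
    rw [hVf]
    exact (h3.trans_le h4).ne'
  have hVtop : h x₀ y₀ ≠ ⊤ := by
    obtain ⟨y₁, hy₁⟩ := hA4.2
    have h1 : Wval f ≤ wmax f y₁ := iInf_le _ y₁
    have hW' : Wval f ≠ ⊤ := fun ht => hy₁ (le_antisymm le_top (ht ▸ h1))
    have h2 : Wval f + (ε'':EReal) < ⊤ := er_add_lt_top' hW' ε''
    have h4 : f x₀ y₀ ≤ wmax f y₀ := le_iSup (fun x => f x y₀) x₀
    rw [hVf]
    exact ((h4.trans_lt hy₀).trans h2).ne
  obtain ⟨v, hv⟩ : ∃ v : ℝ, h x₀ y₀ = (v:EReal) :=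
    ⟨(h x₀ y₀).toReal, (EReal.coe_toReal hVtop hVbot).symm⟩
  have hgy₀ : ∀ x, g x y₀ = h x y₀ - (k' x : EReal) := by
    intro x; simp [hgdef, hr'y₀]
  have hgx₀ : ∀ y, g x₀ y = h x₀ y + (r' y : EReal) := by
    intro y; simp [hgdef, hk'x₀]
  have hg00 : g x₀ y₀ = h x₀ y₀ := by rw [hgy₀, hk'x₀]; simp
  have hsg : SaddlePt g x₀ y₀ := by
    intro x y
    constructor
    · rw [hgy₀ x, hg00]
      exact (er_sub_le (hk'0 x)).trans (hsp' x y₀).1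
    · rw [hgx₀ y, hg00]
      exact (hsp' x y).2.trans (er_le_add (hr'0 y))
  have hvg₀ : vmin g x₀ = h x₀ y₀ := by
    refine le_antisymm ((iInf_le _ y₀).trans_eq hg00) (le_iInf fun y => ?_)
    exact hg00 ▸ (hsg x₀ y).2
  have hwg₀ : wmax g y₀ = h x₀ y₀ := by
    refine le_antisymm (iSup_le fun x => hg00 ▸ (hsg x y₀).1) ?_
    exact (le_iSup (fun x => g x y₀) x₀).trans_eq' hg00
  have hkey1 : ∀ x, vmin g x ≤ h x₀ y₀ - (k' x : EReal) := by
    intro x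
    calc vmin g x ≤ g x y₀ := iInf_le _ y₀
      _ = h x y₀ - (k' x : EReal) := hgy₀ x
      _ ≤ h x₀ y₀ - (k' x : EReal) := er_sub_le_sub' _ (hsp' x y₀).1
  have hkey2 : ∀ y, h x₀ y₀ + (r' y : EReal) ≤ wmax g y := by
    intro y
    calc h x₀ y₀ + (r' y : EReal) ≤ h x₀ y + (r' y : EReal) := er_add_le_add' _ (hsp' x₀ y).2
      _ = g x₀ y := (hgx₀ y).symm
      _ ≤ wmax g y := le_iSup (fun x => g x y) x₀
  have hVg : Vval g = h x₀ y₀ := by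
    refine le_antisymm (iSup_le fun x => (hkey1 x).trans (er_sub_le (hk'0 x))) ?_
    exact hvg₀ ▸ le_iSup (vmin g) x₀
  have hWg : Wval g = h x₀ y₀ := by
    refine le_antisymm (hwg₀ ▸ iInf_le (wmax g) y₀) ?_
    exact le_iInf fun y => (er_le_add (hr'0 y)).trans (hkey2 y)
  have huniqx : ∀ x, vmin g x = Vval g → x = x₀ := by
    intro x hx
    have h1 : (v:EReal) ≤ ((v - k' x : ℝ):EReal) := by
      rw [EReal.coe_sub]
      calc (v:EReal) = vmin g x := by rw [hx, hVg, hv]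
        _ ≤ h x₀ y₀ - (k' x:EReal) := hkey1 x
        _ = (v:EReal) - (k' x:EReal) := by rw [hv]
    have h2 : v ≤ v - k' x := EReal.coe_le_coe_iff.1 h1
    exact hk'uniq x (le_antisymm (by linarith) (hk'0 x))
  have huniqy : ∀ y, wmax g y = Wval g → y = y₀ := by
    intro y hy
    have h1 : ((v + r' y : ℝ):EReal) ≤ (v:EReal) := by
      rw [EReal.coe_add]
      calc (v:EReal) + (r' y:EReal) = h x₀ y₀ + (r' y:EReal) := by rw [hv]
        _ ≤ wmax g y := hkey2 y
        _ = (v:EReal) := by rw [hy, hWg, hv]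
    have h2 : v + r' y ≤ v := EReal.coe_le_coe_iff.1 h1
    exact hr'uniq y (le_antisymm (by linarith) (hr'0 y))
  have hconvx : ∀ u : ℕ → X, Tendsto (fun n => vmin g (u n)) atTop (𝓝 (Vval g)) →
      Tendsto u atTop (𝓝 x₀) := by
    intro u hu
    rw [hVg, hv] at hu
    have hle1 : ∀ n, vmin g (u n) ≤ ((v - k' (u n):ℝ):EReal) := fun n => by
      rw [EReal.coe_sub]
      exact (hkey1 (u n)).trans_eq (by rw [hv])
    have hle2 : ∀ n, ((v - k' (u n):ℝ):EReal) ≤ (v:EReal) := fun n =>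
      EReal.coe_le_coe_iff.2 (by linarith [hk'0 (u n)])
    have hmid : Tendsto (fun n => ((v - k' (u n):ℝ):EReal)) atTop (𝓝 (v:EReal)) :=
      tendsto_of_tendsto_of_tendsto_of_le_of_le hu tendsto_const_nhds hle1 hle2
    have hmid' : Tendsto (fun n => v - k' (u n)) atTop (𝓝 v) := EReal.tendsto_coe.1 hmid
    have hk0' : Tendsto (fun n => k' (u n)) atTop (𝓝 0) := by
      have := (tendsto_const_nhds (x := v)).sub hmid'
      simpa using this
    exact hk'conv u hk0'
  have hconvy : ∀ u : ℕ → Y, Tendsto (fun n => wmax g (u n)) atTop (𝓝 (Wval g)) →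
      Tendsto u atTop (𝓝 y₀) := by
    intro u hu
    rw [hWg, hv] at hu
    have hle1 : ∀ n, ((v + r' (u n):ℝ):EReal) ≤ wmax g (u n) := fun n => by
      rw [EReal.coe_add]
      exact le_trans (by rw [hv]) (hkey2 (u n))
    have hle2 : ∀ n, (v:EReal) ≤ ((v + r' (u n):ℝ):EReal) := fun n =>
      EReal.coe_le_coe_iff.2 (by linarith [hr'0 (u n)])
    have hmid : Tendsto (fun n => ((v + r' (u n):ℝ):EReal)) atTop (𝓝 (v:EReal)) :=
      tendsto_of_tendsto_of_tendsto_of_le_of_le tendsto_const_nhds hu hle2 hle1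
    have hmid' : Tendsto (fun n => v + r' (u n)) atTop (𝓝 v) := EReal.tendsto_coe.1 hmid
    have hr0' : Tendsto (fun n => r' (u n)) atTop (𝓝 0) := by
      have := hmid'.sub (tendsto_const_nhds (x := v))
      simpa using this
    exact hr'conv u hr0'
  refine ⟨k', r', hk'0, hr'0, hk'x₀, hr'y₀, hk'n, hr'n, ?_, ?_, ?_⟩
  · exact ⟨hvg₀.trans hVg.symm, huniqx, hconvx⟩
  · exact ⟨hwg₀.trans hWg.symm, huniqy, hconvy⟩
  · refine ⟨hsg, ?_, ?_⟩
    · intro x y hxy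
      have h1 : vmin g x = g x y := le_antisymm (iInf_le _ y) (le_iInf fun y' => (hxy x y').2)
      have h2 : wmax g y = g x y := le_antisymm (iSup_le fun x' => (hxy x' y).1)
        (le_iSup (fun x' => g x' y) x)
      have h3 : vmin g x = Vval g := by
        refine le_antisymm (le_iSup (vmin g) x) ?_
        calc Vval g = h x₀ y₀ := hVg
          _ = Wval g := hWg.symm
          _ ≤ wmax g y := iInf_le (wmax g) y
          _ = g x y := h2
          _ = vmin g x := h1.symm
      have h4 : wmax g y = Wval g := by
        refine le_antisymm ?_ (iInf_le (wmax g) y)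
        calc wmax g y = g x y := h2
          _ = vmin g x := h1.symm
          _ ≤ Vval g := le_iSup (vmin g) x
          _ = h x₀ y₀ := hVg
          _ = Wval g := hWg.symm
      exact ⟨huniqx x h3, huniqy y h4⟩
    · intro xs ys hopt
      exact (hconvx xs hopt.1).prodMk_nhds (hconvy ys hopt.2.1)
end
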